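/- arXiv:1812.01971 — 10 statements merged into one kernel-verified Lean document; each statement's English description precedes it below -/
import Mathlib

section
/- Let R be a unital ring, a ∈ R a regular element with a = aba, and e = ab. Then the map x ↦ xb is a ring isomorphism from aRa (with multiplication inherited from R) onto the ring (eRe, +, ∗) with multiplication x ∗ y = x(eae)y, and its inverse is x ↦ xa. -/
/-!
Both maps are one-sided multiplications, so everything reduces to the absorption laws
`a * b * x = x = x * b * a` on `aRa` and `e * x = x = x * e` on `eRe`, consequences of
`a * b * a = a`. Multiplicativity is then `x b (e a e) y b = (x b a) (a b y) b = x y b`,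
since `e a e = a a b`.
-/

section Semigroup

variable {S : Type*} [Semigroup S] {a b : S}

theorem isIdempotentElem_mul_of_mul_mul_eq (hb : a * b * a = a) : IsIdempotentElem (a * b) := by
  rw [IsIdempotentElem, ← mul_assoc, hb]

theorem mul_mul_sandwich_left (hb : a * b * a = a) (r : S) : a * b * (a * r * a) = a * r * a := by
  simp only [← mul_assoc, hb]

theorem sandwich_mul_mul_right (hb : a * b * a = a) (r : S) : a * r * a * b * a = a * r * a := by
  rw [mul_assoc (a * r), mul_assoc (a * r), hb]

theorem IsIdempotentElem.corner_mul {e x : S} (he : IsIdempotentElem e) (hx : e * x * e = x) :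
    x * e = x := by
  rw [← hx, mul_assoc, he.eq]

theorem mul_eq_sandwich_of_corner (hb : a * b * a = a) {x : S} (hx : a * b * x * (a * b) = x) :
    x * a = a * (b * x) * a := by
  conv_lhs => rw [← hx]
  simp only [mul_assoc, hb]

theorem mul_right_mem_corner {x : S} (hx : a * b * x = x) (hx' : x * b * a = x) :
    a * b * (x * b) * (a * b) = x * b := by
  simp only [← mul_assoc]
  rw [hx, hx']

theorem mul_right_mul_eq_deformed_mul (hb : a * b * a = a) {x y : S} (hx : x * b * a = x)
    (hy : a * b * y = y) :
    x * y * b = x * b * (a * b * a * (a * b)) * (y * b) := by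
  conv_lhs => rw [← hx, ← hy]
  simp only [hb, mul_assoc]

end Semigroup

/-- Let `a` be regular with `a = a*b*a` and `e = a*b`. Then `x ↦ x*b` is a ring isomorphism
from `aRa` (with the multiplication of `R`) onto the ring `(eRe, +, ∗)` with deformed
multiplication `x ∗ y = x*(e*a*e)*y`, with inverse `x ↦ x*a`. -/
theorem aRa_iso_corner_deformed {R : Type*} [Ring R] (a b : R) (hb : a * b * a = a) :
    (∀ x : R, (∃ r : R, x = a * r * a) →
        (a * b) * (x * b) * (a * b) = x * b) ∧  -- x ↦ x*b maps aRa into eRe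
    (∀ x : R, (a * b) * x * (a * b) = x →
        ∃ r : R, x * a = a * r * a) ∧  -- x ↦ x*a maps eRe into aRa
    (∀ x : R, (∃ r : R, x = a * r * a) → (x * b) * a = x) ∧  -- inverse on aRa
    (∀ x : R, (a * b) * x * (a * b) = x → (x * a) * b = x) ∧  -- inverse on eRe
    (∀ x y : R, (x + y) * b = x * b + y * b) ∧  -- additivity
    (∀ x y : R, (∃ r : R, x = a * r * a) → (∃ r : R, y = a * r * a) →
        (x * y) * b = (x * b) * ((a * b) * a * (a * b)) * (y * b)) := by  -- multiplicativity
  refine ⟨?_, fun x hx => ⟨b * x, mul_eq_sandwich_of_corner hb hx⟩, ?_, fun x hx => ?_,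
    fun x y => add_mul x y b, ?_⟩
  · rintro x ⟨r, rfl⟩
    exact mul_right_mem_corner (mul_mul_sandwich_left hb r) (sandwich_mul_mul_right hb r)
  · rintro x ⟨r, rfl⟩
    exact sandwich_mul_mul_right hb r
  · rw [mul_assoc]
    exact (isIdempotentElem_mul_of_mul_mul_eq hb).corner_mul hx
  · rintro x y ⟨r, rfl⟩ ⟨s, rfl⟩
    exact mul_right_mul_eq_deformed_mul hb (sandwich_mul_mul_right hb r)
      (mul_mul_sandwich_left hb s)
end

section
/- Let R be a unital ring and s ∈ R. The Jacobson radical of the ring R_s (R with multiplication x ∗ y = xsy) equals {x ∈ R : sxs ∈ J(R)}, where J(R) is the Jacobson radical of R. -/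
/-!
With `a ∗ b = a * s * b`, the identity `(1 - a * s) * (1 - b * s) = 1 - (a + b - a ∗ b) * s` turns a
right quasi-inverse `b` of `a = x * s * r` (which then lies in `x * s * R`) into a right inverse of
`1 - (x * s) * (r * s)` of the same shape, and in a monoid, a set in which every element has a right
inverse consists of units. So `x ∈ J(R_s)` iff every `1 - (x * s) * (r * s)` is a unit. By Jacobson's
trick this holds iff every `1 - r * (s * x * s)` is a unit, that is, iff `s * x * s ∈ J(R)`.
-/

/-- The Jacobson radical of the (possibly non-unital) ring on the additive group of `R`
with multiplication `mul`: the set of `x` such that `mul x r` is right quasi-regular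
for every `r`. -/
def jacobsonQR {R : Type*} [Ring R] (mul : R → R → R) : Set R :=
  {x : R | ∀ r : R, ∃ b : R, mul x r + b - mul (mul x r) b = 0}

section Monoid

variable {M : Type*} [Monoid M] {S : Set M}

theorem isUnit_of_forall_exists_mul_eq_one (h : ∀ u ∈ S, ∃ v ∈ S, u * v = 1) {u : M}
    (hu : u ∈ S) : IsUnit u := by
  obtain ⟨v, hv, huv⟩ := h u hu
  obtain ⟨w, -, hvw⟩ := h v hv
  have hwu : w = u := by rw [← one_mul w, ← huv, mul_assoc, hvw, mul_one]
  exact isUnit_iff_exists.2 ⟨v, huv, hwu ▸ hvw⟩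

theorem isUnit_of_forall_exists_mul_eq_one_left (h : ∀ u ∈ S, ∃ v ∈ S, v * u = 1) {u : M}
    (hu : u ∈ S) : IsUnit u :=
  isUnit_op.1 <| isUnit_of_forall_exists_mul_eq_one (S := MulOpposite.unop ⁻¹' S)
    (fun _ hu => let ⟨v, hv, hvu⟩ := h _ hu; ⟨MulOpposite.op v, hv, congrArg MulOpposite.op hvu⟩)
    hu

end Monoid

section Ring

variable {R : Type*} [Ring R]

theorem isUnit_one_sub_mul_comm {a b : R} : IsUnit (1 - a * b) ↔ IsUnit (1 - b * a) := by
  suffices h : ∀ a b : R, IsUnit (1 - a * b) → IsUnit (1 - b * a) from ⟨h a b, h b a⟩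
  intro a b ⟨u, hu⟩
  refine isUnit_iff_exists.2 ⟨1 + b * ↑u⁻¹ * a, ?_, ?_⟩
  · calc (1 - b * a) * (1 + b * ↑u⁻¹ * a) = 1 + b * ((1 - a * b) * ↑u⁻¹ - 1) * a := by
          noncomm_ring
      _ = 1 := by rw [← hu, Units.mul_inv, sub_self, mul_zero, zero_mul, add_zero]
  · calc (1 + b * ↑u⁻¹ * a) * (1 - b * a) = 1 + b * (↑u⁻¹ * (1 - a * b) - 1) * a := by
          noncomm_ring
      _ = 1 := by rw [← hu, Units.inv_mul, sub_self, mul_zero, zero_mul, add_zero]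

theorem Ideal.mem_jacobson_bot_iff_forall_isUnit_one_sub_mul {x : R} :
    x ∈ Ideal.jacobson (⊥ : Ideal R) ↔ ∀ y, IsUnit (1 - y * x) := by
  have left_inv_iff (y z : R) : z * y * x + z - 1 ∈ (⊥ : Ideal R) ↔ z * (1 - -y * x) = 1 := by
    rw [Ideal.mem_bot, ← sub_eq_zero (b := (1 : R))]
    exact Eq.congr_left (by noncomm_ring)
  constructor
  · intro hx y
    refine isUnit_of_forall_exists_mul_eq_one_left (S := Set.range fun y => 1 - y * x) ?_ ⟨y, rfl⟩
    rintro _ ⟨y, rfl⟩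
    obtain ⟨z, hz⟩ := Ideal.mem_jacobson_iff.1 hx (-y)
    rw [left_inv_iff, neg_neg] at hz
    -- the left inverse `z = 1 + z * y * x` has the same shape
    refine ⟨z, ⟨-(z * y), ?_⟩, hz⟩
    calc 1 - -(z * y) * x = 1 + z * (1 - (1 - y * x)) := by noncomm_ring
      _ = z := by rw [mul_sub, hz, mul_one, add_sub_cancel]
  · intro h
    refine Ideal.mem_jacobson_iff.2 fun y => ?_
    obtain ⟨u, hu⟩ := h (-y)
    exact ⟨↑u⁻¹, (left_inv_iff _ _).2 (by rw [← hu, Units.inv_mul])⟩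

theorem one_sub_mul_mul_one_sub_mul_eq_one {a b s : R} (h : a + b - a * s * b = 0) :
    (1 - a * s) * (1 - b * s) = 1 := by
  calc (1 - a * s) * (1 - b * s) = 1 - (a + b - a * s * b) * s := by noncomm_ring
    _ = 1 := by rw [h, zero_mul, sub_zero]

theorem exists_add_sub_mul_mul_eq_zero_of_isUnit {a s : R} (h : IsUnit (1 - a * s)) :
    ∃ b, a + b - a * s * b = 0 := by
  obtain ⟨u, hu⟩ := h
  refine ⟨-(↑u⁻¹ * a), ?_⟩
  calc a + -(↑u⁻¹ * a) - a * s * -(↑u⁻¹ * a) = a - (1 - a * s) * ↑u⁻¹ * a := by noncomm_ring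
    _ = 0 := by rw [← hu, Units.mul_inv, one_mul, sub_self]

theorem mem_jacobsonQR_iff_forall_isUnit {s x : R} :
    x ∈ jacobsonQR (fun x y : R => x * s * y) ↔ ∀ r, IsUnit (1 - x * s * r * s) := by
  constructor
  · intro hx r
    refine isUnit_of_forall_exists_mul_eq_one (S := Set.range fun r => 1 - x * s * r * s) ?_
      ⟨r, rfl⟩
    rintro _ ⟨r, rfl⟩
    obtain ⟨b, hb⟩ := hx r
    beta_reduce at hb
    have hb' : b = x * s * (r * s * b - r) := by
      rw [← sub_eq_zero, ← hb]
      noncomm_ring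
    refine ⟨_, ⟨r * s * b - r, rfl⟩, ?_⟩
    simpa only [← hb'] using one_sub_mul_mul_one_sub_mul_eq_one hb
  · intro h r
    exact exists_add_sub_mul_mul_eq_zero_of_isUnit (h r)

end Ring

/-- For `s ∈ R`, the Jacobson radical of `R_s` (the ring `R` with multiplication
`x ∗ y = x*s*y`) equals `{x : s*x*s ∈ J(R)}`. -/
theorem jacobson_deformed {R : Type*} [Ring R] (s : R) :
    jacobsonQR (fun x y : R => x * s * y) =
      {x : R | s * x * s ∈ Ideal.jacobson (⊥ : Ideal R)} := by
  ext x
  rw [Set.mem_ofPred_eq, mem_jacobsonQR_iff_forall_isUnit,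
    Ideal.mem_jacobson_bot_iff_forall_isUnit_one_sub_mul]
  refine forall_congr' fun r => ?_
  simpa only [mul_assoc] using isUnit_one_sub_mul_comm (a := x * s) (b := r * s)
end

section
/- Let R be a unital ring and s ∈ R. Then J(R) ⊆ J(R_s), where R_s is R with multiplication x ∗ y = xsy. -/
section JacobsonBot

open Ideal

variable {R : Type*} [Ring R] {x : R}

lemma exists_mul_mul_add_one_eq_one_of_mem_jacobson_bot (hx : x ∈ jacobson (⊥ : Ideal R))
    (y : R) : ∃ z, z * (y * x + 1) = 1 := by
  obtain ⟨z, hz⟩ := mem_jacobson_iff.1 hx y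
  rw [mem_bot, sub_eq_zero] at hz
  exact ⟨z, by rw [mul_add, mul_one, ← mul_assoc, hz]⟩

/-- The left inverse `z` of `y * x + 1` is itself of the form `y' * x + 1`, hence has a left
inverse too, which forces it to be two-sided. -/
lemma isUnit_mul_add_one_of_mem_jacobson_bot (hx : x ∈ jacobson (⊥ : Ideal R)) (y : R) :
    IsUnit (y * x + 1) := by
  obtain ⟨z, hz⟩ := exists_mul_mul_add_one_eq_one_of_mem_jacobson_bot hx y
  obtain ⟨w, hw⟩ := exists_mul_mul_add_one_eq_one_of_mem_jacobson_bot hx (-(z * y))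
  have hz_eq : -(z * y) * x + 1 = z := by
    rw [mul_add, mul_one, ← mul_assoc] at hz
    rw [neg_mul, ← hz, neg_add_cancel_left]
  rw [hz_eq] at hw
  have hw_eq : w = y * x + 1 := left_inv_eq_right_inv hw hz
  exact ⟨⟨y * x + 1, z, hw_eq ▸ hw, hz⟩, rfl⟩

lemma exists_right_quasiInverse_of_mem_jacobson_bot (hx : x ∈ jacobson (⊥ : Ideal R)) :
    ∃ c, x + c - x * c = 0 := by
  obtain ⟨u, hu⟩ := isUnit_mul_add_one_of_mem_jacobson_bot hx (-1)
  refine ⟨1 - ↑u⁻¹, ?_⟩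
  calc x + (1 - ↑u⁻¹) - x * (1 - ↑u⁻¹) = 1 - (-1 * x + 1) * ↑u⁻¹ := by noncomm_ring
    _ = 0 := by rw [← hu, Units.mul_inv, sub_self]

end JacobsonBot

lemma right_quasiInverse_deformed {R : Type*} [Ring R] {a s c : R}
    (hc : a * s + c - a * s * c = 0) : a + (c * a - a) - a * s * (c * a - a) = 0 :=
  calc a + (c * a - a) - a * s * (c * a - a) = (a * s + c - a * s * c) * a := by noncomm_ring
    _ = 0 := by rw [hc, zero_mul]

/-- For `s ∈ R`, `J(R) ⊆ J(R_s)`, where `R_s` is `R` with multiplication `x ∗ y = x*s*y`. -/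
theorem jacobson_subset_jacobson_deformed {R : Type*} [Ring R] (s : R) :
    (Ideal.jacobson (⊥ : Ideal R) : Set R) ⊆ jacobsonQR (fun x y : R => x * s * y) := by
  intro x hx r
  have hJ : x * s * r * s ∈ Ideal.jacobson (⊥ : Ideal R) := by
    simpa only [mul_assoc] using Ideal.mul_mem_right (s * r * s) _ hx
  obtain ⟨c, hc⟩ := exists_right_quasiInverse_of_mem_jacobson_bot hJ
  exact ⟨c * (x * s * r) - x * s * r, right_quasiInverse_deformed hc⟩
end

section
/- Let R be a unital ring and e ∈ R an idempotent. Then the quotient R_e/J(R_e) is isomorphic to eRe/J(eRe), where R_e is R with multiplication x ∗ y = xey, and the isomorphism is induced by x ↦ exe. -/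
/-- The Jacobson radical of the ring given by a subset `A` of `R` closed under the
operations of `R`, via right quasi-regularity within `A`. -/
def jacobsonOfSubset {R : Type*} [Ring R] (A : Set R) : Set R :=
  {x ∈ A | ∀ r ∈ A, ∃ y ∈ A, x * r + y - x * r * y = 0}

section

variable {R : Type*} [Ring R]

/-- `y` is a right quasi-inverse of `x`, i.e. `(1 - x) * (1 - y) = 1`. -/
def IsRightQuasiInverse (x y : R) : Prop := x + y - x * y = 0

theorem IsRightQuasiInverse.mul_swap {u v c : R} (h : IsRightQuasiInverse (v * u) c) :
    IsRightQuasiInverse (u * v) (u * c * v - u * v) := by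
  have expand : u * v + (u * c * v - u * v) - u * v * (u * c * v - u * v) =
      u * (v * u + c - v * u * c) * v := by noncomm_ring
  rw [IsRightQuasiInverse, expand, h, mul_zero, zero_mul]

theorem IsRightQuasiInverse.deformed_of_mul {a e y : R}
    (h : IsRightQuasiInverse (a * e) y) : a + (y * a - a) - a * e * (y * a - a) = 0 := by
  have expand : a + (y * a - a) - a * e * (y * a - a) = (a * e + y - a * e * y) * a := by
    noncomm_ring
  rw [expand, h, zero_mul]

namespace IsIdempotentElem

variable {e : R} (he : IsIdempotentElem e)
include he

theorem corner_mem (x : R) : e * (e * x * e) * e = e * x * e := by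
  simp only [mul_assoc, he.mul_self_mul, he.eq]

theorem corner_mul_corner (x y : R) : e * x * e * (e * y * e) = e * (x * e * y) * e := by
  simp only [mul_assoc, he.mul_self_mul]

theorem forall_corner_iff {P : R → Prop} :
    (∀ r, P (e * r * e)) ↔ ∀ s, e * s * e = s → P s :=
  ⟨fun h s hs => hs ▸ h s, fun h r => h _ (he.corner_mem r)⟩

theorem isRightQuasiInverse_corner {a b : R} (h : a + b - a * e * b = 0) :
    IsRightQuasiInverse (e * a * e) (e * b * e) := by
  have sandwich : e * a * e + e * b * e - e * a * e * (e * b * e) =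
      e * (a + b - a * e * b) * e := by
    rw [he.corner_mul_corner]; noncomm_ring
  rw [IsRightQuasiInverse, sandwich, h, mul_zero, zero_mul]

theorem exists_deformed_quasiInverse_iff (a : R) :
    (∃ b, a + b - a * e * b = 0) ↔ ∃ c, e * c * e = c ∧ IsRightQuasiInverse (e * a * e) c := by
  constructor
  · rintro ⟨b, hb⟩
    exact ⟨e * b * e, he.corner_mem b, he.isRightQuasiInverse_corner hb⟩
  · rintro ⟨c, -, hc⟩
    have hvu : IsRightQuasiInverse (e * (a * e)) c := by rwa [← mul_assoc]
    have hae : IsRightQuasiInverse (a * e) (a * e * c * e - a * e) := by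
      simpa only [mul_assoc, he.eq] using hvu.mul_swap
    exact ⟨_, hae.deformed_of_mul⟩

end IsIdempotentElem

end

/-- For an idempotent `e`, the map `x ↦ e*x*e` is a surjection from `R_e`
(the ring `R` with multiplication `x ∗ y = x*e*y`) onto the corner ring `eRe` that is
additive and multiplicative, and its kernel condition identifies the radicals:
it induces an isomorphism `R_e/J(R_e) ≅ eRe/J(eRe)`. -/
theorem deformed_mod_jacobson_iso_corner {R : Type*} [Ring R] (e : R) (he : e * e = e) :
    (∀ x : R, e * (e * x * e) * e = e * x * e) ∧  -- lands in eRe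
    (∀ y : R, e * y * e = y → ∃ x : R, e * x * e = y) ∧  -- surjective onto eRe
    (∀ x y : R, e * (x + y) * e = e * x * e + e * y * e) ∧  -- additive
    (∀ x y : R, e * (x * e * y) * e = (e * x * e) * (e * y * e)) ∧  -- multiplicative
    (∀ x : R, x ∈ jacobsonQR (fun x y : R => x * e * y) ↔
        e * x * e ∈ jacobsonOfSubset {z : R | e * z * e = z}) := by  -- radicals correspond
  have he : IsIdempotentElem e := he
  refine ⟨he.corner_mem, fun y hy => ⟨y, hy⟩, fun x y => by rw [mul_add, add_mul],
    fun x y => (he.corner_mul_corner x y).symm, fun x => ?_⟩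
  have quasi_iff : ∀ r, (∃ b, x * e * r + b - x * e * r * e * b = 0) ↔
      ∃ c, e * c * e = c ∧ IsRightQuasiInverse (e * x * e * (e * r * e)) c := fun r => by
    rw [he.corner_mul_corner, he.exists_deformed_quasiInverse_iff]
  show (∀ r, ∃ b, x * e * r + b - x * e * r * e * b = 0) ↔ e * (e * x * e) * e = e * x * e ∧
    ∀ s, e * s * e = s → ∃ c, e * c * e = c ∧ IsRightQuasiInverse (e * x * e * s) c
  rw [forall_congr' quasi_iff, he.forall_corner_iff (P := fun s =>
    ∃ c, e * c * e = c ∧ IsRightQuasiInverse (e * x * e * s) c)]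
  exact (and_iff_right (he.corner_mem x)).symm
end

section
/- Let R be a unital semiprime ring and a ∈ R a regular element with aRa ⊆ soc R (e.g., a of finite rank). Then J(aRa) = {x ∈ aRa : axa = 0}. -/
/-!
If `x ∈ J(aRa)`, then `axa` lies in the socle, and socle elements of a semiprime ring are von
Neumann regular, so `axa = axa·v·axa` with `v·axa·v = v`. Then `x·ava` is an idempotent of `aRa`
lying in `J(aRa)`, hence zero, and `axa = a·(x·ava)·xa = 0`. Conversely, if `axa = 0` then every
product `x·ata` squares to zero, so it is quasi-regular.

Regularity of the socle: by Brauer's lemma a minimal right ideal `K` of a semiprime ring is `eR`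
with `e` idempotent. Let `u = k + s` with `k ∈ K` and `s` a shorter sum of elements of minimal
right ideals. Then `(1 - e)u = (1 - e)s` is regular by induction (the induction hypothesis covers
all left multiples `c·s`, since left multiplication sends a minimal right ideal to a minimal one
or to `0`), say `(1 - e)u·w·(1 - e)u = (1 - e)u`. Now `d = u - u·w(1 - e)u` satisfies `ed = d`,
so it lies in `uR ∩ K`. Either this intersection is `0`, so `d = 0` and `u = u·w(1 - e)·u`, or it
is `K`, so `e = uq` for some `q`, and then `u·(q + (1 - qu)w(1 - e))·u = u`.
-/

/-- A right ideal of a ring, as a set. -/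
def IsRightIdeal {R : Type*} [Ring R] (K : Set R) : Prop :=
  (0 : R) ∈ K ∧ (∀ x ∈ K, ∀ y ∈ K, x + y ∈ K) ∧ (∀ x ∈ K, -x ∈ K) ∧
    ∀ x ∈ K, ∀ r : R, x * r ∈ K

/-- A minimal right ideal: a nonzero right ideal with no proper nonzero right sub-ideal. -/
def IsMinimalRightIdeal {R : Type*} [Ring R] (K : Set R) : Prop :=
  IsRightIdeal K ∧ K ≠ {0} ∧
    ∀ L : Set R, IsRightIdeal L → L ⊆ K → L = {0} ∨ L = K

/-- The right socle of `R`: the sum of all minimal right ideals of `R`. -/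
def rightSocle (R : Type*) [Ring R] : Set R :=
  (AddSubgroup.closure (⋃ K ∈ {K : Set R | IsMinimalRightIdeal K}, K) : AddSubgroup R)

/-- A ring is semiprime iff `aRa = 0` implies `a = 0`. -/
def IsSemiprime (R : Type*) [Ring R] : Prop :=
  ∀ a : R, (∀ r : R, a * r * a = 0) → a = 0

def IsVonNeumannRegular {R : Type*} [Ring R] (u : R) : Prop :=
  ∃ v, u * v * u = u

/-- Unlike minimality, this is preserved by left multiplication. -/
def IsMinimalOrZeroRightIdeal {R : Type*} [Ring R] (K : Set R) : Prop :=
  IsRightIdeal K ∧ ∀ L : Set R, IsRightIdeal L → L ⊆ K → L = {0} ∨ L = K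

section RightIdeal

variable {R : Type*} [Ring R] {K L : Set R}

theorem IsRightIdeal.mul_mem (hK : IsRightIdeal K) {x : R} (hx : x ∈ K) (r : R) : x * r ∈ K :=
  hK.2.2.2 x hx r

theorem isRightIdeal_univ : IsRightIdeal (Set.univ : Set R) := by
  simp [IsRightIdeal]

theorem isRightIdeal_zero : IsRightIdeal ({0} : Set R) := by
  simp [IsRightIdeal]

theorem IsRightIdeal.inter (hK : IsRightIdeal K) (hL : IsRightIdeal L) : IsRightIdeal (K ∩ L) :=
  ⟨⟨hK.1, hL.1⟩, fun x hx y hy => ⟨hK.2.1 x hx.1 y hy.1, hL.2.1 x hx.2 y hy.2⟩,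
    fun x hx => ⟨hK.2.2.1 x hx.1, hL.2.2.1 x hx.2⟩,
    fun _ hx r => ⟨hK.mul_mem hx.1 r, hL.mul_mem hx.2 r⟩⟩

theorem IsRightIdeal.image_mul_left (hK : IsRightIdeal K) (c : R) :
    IsRightIdeal ((c * ·) '' K) := by
  refine ⟨⟨0, hK.1, mul_zero c⟩, ?_, ?_, ?_⟩
  · rintro _ ⟨x, hx, rfl⟩ _ ⟨y, hy, rfl⟩
    exact ⟨x + y, hK.2.1 x hx y hy, mul_add c x y⟩
  · rintro _ ⟨x, hx, rfl⟩
    exact ⟨-x, hK.2.2.1 x hx, mul_neg c x⟩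
  · rintro _ ⟨x, hx, rfl⟩ r
    exact ⟨x * r, hK.mul_mem hx r, (mul_assoc c x r).symm⟩

theorem IsRightIdeal.preimage_mul_left (hL : IsRightIdeal L) (c : R) :
    IsRightIdeal ((c * ·) ⁻¹' L) := by
  refine ⟨?_, fun x hx y hy => ?_, fun x hx => ?_, fun x hx r => ?_⟩
  · simpa using hL.1
  · simpa [mul_add] using hL.2.1 _ hx _ hy
  · simpa [mul_neg] using hL.2.2.1 _ hx
  · simpa [mul_assoc] using hL.mul_mem hx r

theorem IsMinimalRightIdeal.isMinimalOrZeroRightIdeal (hK : IsMinimalRightIdeal K) :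
    IsMinimalOrZeroRightIdeal K :=
  ⟨hK.1, hK.2.2⟩

theorem IsMinimalOrZeroRightIdeal.eq_of_mem (hK : IsMinimalOrZeroRightIdeal K)
    (hL : IsRightIdeal L) (hLK : L ⊆ K) {x : R} (hx : x ∈ L) (hx0 : x ≠ 0) : L = K :=
  (hK.2 L hL hLK).resolve_left fun h => hx0 (Set.mem_singleton_iff.1 (h ▸ hx))

theorem IsMinimalOrZeroRightIdeal.image_mul_left (hK : IsMinimalOrZeroRightIdeal K) (c : R) :
    IsMinimalOrZeroRightIdeal ((c * ·) '' K) := by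
  refine ⟨hK.1.image_mul_left c, fun L hL hLK => ?_⟩
  rcases hK.2 _ (hK.1.inter (hL.preimage_mul_left c)) Set.inter_subset_left with h | h
  · refine Or.inl (Set.eq_singleton_iff_unique_mem.2 ⟨hL.1, fun z hz => ?_⟩)
    obtain ⟨w, hw, rfl⟩ := hLK hz
    rw [Set.mem_singleton_iff.1 (h ▸ ⟨hw, hz⟩ : w ∈ ({0} : Set R))]
    exact mul_zero c
  · refine Or.inr (hLK.antisymm ?_)
    rintro _ ⟨w, hw, rfl⟩
    exact (h ▸ hw : w ∈ K ∩ _).2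

end RightIdeal

section Socle

variable {R : Type*} [Ring R]

/-- Brauer's lemma. -/
theorem IsMinimalOrZeroRightIdeal.exists_isIdempotentElem (hR : IsSemiprime R) {K : Set R}
    (hK : IsMinimalOrZeroRightIdeal K) {k₀ : R} (hk₀ : k₀ ∈ K) (hk₀0 : k₀ ≠ 0) :
    ∃ e, IsIdempotentElem e ∧ e ∈ K ∧ ∀ x ∈ K, e * x = x := by
  have hKK : ∃ k ∈ K, ∃ k' ∈ K, k * k' ≠ 0 := by
    by_contra! h
    exact hk₀0 (hR k₀ fun r => h _ (hK.1.mul_mem hk₀ r) k₀ hk₀)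
  obtain ⟨k, hk, k', hk', hkk'⟩ := hKK
  have hkK : (k * ·) '' K = K :=
    hK.eq_of_mem (hK.1.image_mul_left k) (fun _ ⟨t, ht, h⟩ => h ▸ hK.1.mul_mem hk t)
      ⟨k', hk', rfl⟩ hkk'
  obtain ⟨e, he, hke⟩ : k ∈ (k * ·) '' K := hkK.symm ▸ hk
  have hk0 : k ≠ 0 := by rintro rfl; exact hkk' (zero_mul k')
  -- The kernel of `t ↦ k * t` on `K` is a proper sub-ideal, as it misses `e`.
  have hker : K ∩ (k * ·) ⁻¹' {0} = {0} := by
    refine (hK.2 _ (hK.1.inter (isRightIdeal_zero.preimage_mul_left k))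
      Set.inter_subset_left).resolve_right fun h => hk0 ?_
    exact hke.symm.trans (h.symm ▸ he : e ∈ K ∩ _).2
  have hidem : IsIdempotentElem e := by
    have hmem : e * e - e ∈ K ∩ (k * ·) ⁻¹' {0} := by
      refine ⟨?_, ?_⟩
      · simpa [sub_eq_add_neg] using hK.1.2.1 _ (hK.1.mul_mem he e) _ (hK.1.2.2.1 e he)
      · simp only [Set.mem_preimage, Set.mem_singleton_iff, mul_sub, ← mul_assoc, hke, sub_self]
    exact sub_eq_zero.1 (Set.mem_singleton_iff.1 (hker ▸ hmem))
  have he0 : e ≠ 0 := by rintro rfl; exact hk0 (hke.symm.trans (mul_zero k))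
  have heK : (e * ·) '' K = K :=
    hK.eq_of_mem (hK.1.image_mul_left e) (fun _ ⟨t, ht, h⟩ => h ▸ hK.1.mul_mem he t)
      ⟨e, he, hidem⟩ he0
  refine ⟨e, hidem, he, fun x hx => ?_⟩
  obtain ⟨y, -, rfl⟩ : x ∈ (e * ·) '' K := heK.symm ▸ hx
  rw [← mul_assoc, hidem]

theorem IsVonNeumannRegular.of_one_sub_mul {u e q : R} (he : e = u * q)
    (h : IsVonNeumannRegular ((1 - e) * u)) : IsVonNeumannRegular u := by
  obtain ⟨w, hw⟩ := h
  refine ⟨q + (1 - q * u) * w * (1 - e), ?_⟩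
  calc u * (q + (1 - q * u) * w * (1 - e)) * u
      = u * q * u + (1 - u * q) * u * w * ((1 - e) * u) := by noncomm_ring
    _ = u := by rw [← he, hw]; noncomm_ring

theorem IsMinimalOrZeroRightIdeal.isVonNeumannRegular_add (hR : IsSemiprime R) {K : Set R}
    (hK : IsMinimalOrZeroRightIdeal K) {k s : R} (hk : k ∈ K)
    (hs : ∀ c, IsVonNeumannRegular (c * s)) : IsVonNeumannRegular (k + s) := by
  rcases eq_or_ne k 0 with rfl | hk0
  · simpa using hs 1
  obtain ⟨e, -, he, heK⟩ := hK.exists_isIdempotentElem hR hk hk0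
  set u := k + s
  obtain ⟨w, hw⟩ := hs (1 - e)
  have hu : (1 - e) * u = (1 - e) * s := by
    rw [mul_add, sub_mul, one_mul, heK k hk, sub_self, zero_add]
  rw [← hu] at hw
  set d := u * (1 - w * ((1 - e) * u)) with hd
  have hdK : d ∈ K := by
    have hed : e * d = d := by
      rw [← sub_eq_zero]
      calc e * d - d = (1 - e) * u * w * ((1 - e) * u) - (1 - e) * u := by rw [hd]; noncomm_ring
        _ = 0 := by rw [hw, sub_self]
    exact hed ▸ hK.1.mul_mem he d
  rcases hK.2 _ ((isRightIdeal_univ.image_mul_left u).inter hK.1) Set.inter_subset_right with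
    h | h
  · have hd0 : d = 0 := Set.mem_singleton_iff.1 (h ▸ ⟨⟨_, trivial, rfl⟩, hdK⟩)
    refine ⟨w * (1 - e), ?_⟩
    calc u * (w * (1 - e)) * u = u - d := by rw [hd]; noncomm_ring
      _ = u := by rw [hd0, sub_zero]
  · obtain ⟨q, -, hq⟩ := (h.symm ▸ he : e ∈ _ ∩ K).1
    exact IsVonNeumannRegular.of_one_sub_mul hq.symm ⟨w, hw⟩

theorem IsMinimalOrZeroRightIdeal.isVonNeumannRegular_mul_add (hR : IsSemiprime R) {K : Set R}
    (hK : IsMinimalOrZeroRightIdeal K) {k s : R} (hk : k ∈ K)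
    (hs : ∀ c, IsVonNeumannRegular (c * s)) (c : R) : IsVonNeumannRegular (c * (k + s)) :=
  mul_add c k s ▸ (hK.image_mul_left c).isVonNeumannRegular_add hR ⟨k, hk, rfl⟩
    fun c' => mul_assoc c' c s ▸ hs (c' * c)

theorem isVonNeumannRegular_of_mem_rightSocle (hR : IsSemiprime R) {u : R}
    (hu : u ∈ rightSocle R) : IsVonNeumannRegular u := by
  suffices h : ∀ c, IsVonNeumannRegular (c * u) by simpa using h 1
  induction hu using AddSubgroup.closure_induction_left with
  | zero => exact fun _ => ⟨0, by simp⟩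
  | add_left k hk s _ hs =>
    obtain ⟨K, hK, hkK⟩ := Set.mem_iUnion₂.1 hk
    exact hK.isMinimalOrZeroRightIdeal.isVonNeumannRegular_mul_add hR hkK hs
  | neg_add_cancel k hk s _ hs =>
    obtain ⟨K, hK, hkK⟩ := Set.mem_iUnion₂.1 hk
    exact hK.isMinimalOrZeroRightIdeal.isVonNeumannRegular_mul_add hR (hK.1.2.2.1 k hkK) hs

end Socle

section Corner

variable {R : Type*} [Ring R] {a : R}

theorem IsVonNeumannRegular.exists_mul_mul_eq_and_mul_mul_eq {u : R} (h : IsVonNeumannRegular u) :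
    ∃ v, u * v * u = u ∧ v * u * v = v := by
  obtain ⟨v, hv⟩ := h
  refine ⟨v * u * v, ?_, ?_⟩
  · calc u * (v * u * v) * u = (u * v * u) * v * u := by noncomm_ring
      _ = u := by rw [hv, hv]
  · calc v * u * v * u * (v * u * v) = v * ((u * v * u) * v * u) * v := by noncomm_ring
      _ = v * u * v := by rw [hv, hv]

theorem IsIdempotentElem.eq_zero_of_add_sub_mul_eq_zero {s y : R} (hs : IsIdempotentElem s)
    (h : s + y - s * y = 0) : s = 0 := by
  simpa [mul_sub, mul_add, ← mul_assoc, hs.eq] using congrArg (s * ·) h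

theorem mul_mul_eq_zero_of_mem_jacobsonOfSubset {x : R}
    (hx : x ∈ jacobsonOfSubset {z : R | ∃ r : R, z = a * r * a})
    (hreg : IsVonNeumannRegular (a * x * a)) : a * x * a = 0 := by
  obtain ⟨v, huvu, hvuv⟩ := hreg.exists_mul_mul_eq_and_mul_mul_eq
  obtain ⟨y, -, hy⟩ := hx.2 (a * v * a) ⟨v, rfl⟩
  have hidem : IsIdempotentElem (x * (a * v * a)) := by
    calc x * (a * v * a) * (x * (a * v * a)) = x * (a * (v * (a * x * a) * v) * a) := by
          noncomm_ring
      _ = x * (a * v * a) := by rw [hvuv]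
  calc a * x * a = a * x * a * v * (a * x * a) := huvu.symm
    _ = a * (x * (a * v * a)) * (x * a) := by noncomm_ring
    _ = 0 := by rw [hidem.eq_zero_of_add_sub_mul_eq_zero hy, mul_zero, zero_mul]

theorem mem_jacobsonOfSubset_of_mul_mul_eq_zero {r : R} (h : a * (a * r * a) * a = 0) :
    a * r * a ∈ jacobsonOfSubset {z : R | ∃ s : R, z = a * s * a} := by
  refine ⟨⟨r, rfl⟩, ?_⟩
  rintro _ ⟨t, rfl⟩
  have hsq : a * r * a * (a * t * a) * (a * r * a * (a * t * a)) = 0 := by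
    calc _ = a * r * a * a * t * (a * (a * r * a) * a) * (t * a) := by noncomm_ring
      _ = 0 := by rw [h, mul_zero, zero_mul]
  refine ⟨-(a * r * a * (a * t * a)), ⟨-(r * a * a * t), by noncomm_ring⟩, ?_⟩
  rw [← hsq]
  noncomm_ring

end Corner

theorem jacobson_aRa_semiprime_general {R : Type*} [Ring R] (hR : IsSemiprime R)
    (a : R)
    (hsoc : ∀ r : R, a * r * a ∈ rightSocle R) :
    jacobsonOfSubset {x : R | ∃ r : R, x = a * r * a} =
      {x : R | (∃ r : R, x = a * r * a) ∧ a * x * a = 0} := by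
  ext x
  constructor
  · intro hx
    exact ⟨hx.1, mul_mul_eq_zero_of_mem_jacobsonOfSubset hx
      (isVonNeumannRegular_of_mem_rightSocle hR (hsoc x))⟩
  · rintro ⟨⟨r, rfl⟩, h⟩
    exact mem_jacobsonOfSubset_of_mul_mul_eq_zero h

/-- If `R` is semiprime, `a` is regular, and `aRa ⊆ soc R`, then
`J(aRa) = {x ∈ aRa : a*x*a = 0}`. -/
theorem jacobson_aRa_semiprime {R : Type*} [Ring R] (hR : IsSemiprime R)
    (a b : R) (hb : a * b * a = a)
    (hsoc : ∀ r : R, a * r * a ∈ rightSocle R) :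
    jacobsonOfSubset {x : R | ∃ r : R, x = a * r * a} =
      {x : R | (∃ r : R, x = a * r * a) ∧ a * x * a = 0} :=
  jacobson_aRa_semiprime_general hR a hsoc
end

section
/- Let R be a unital semiprime ring and a ∈ R a regular element such that there exist b, c ∈ R with a = a²b = ca², and such that axa ∈ soc R for all x ∈ R. Then J(aRa) = 0. -/
/-!
In a semiprime ring every nonzero `z ∈ soc R` has a nonzero idempotent in `zR`: some `zxz ≠ 0`,
so `zx` does not annihilate some minimal right ideal `K`, the right ideal `zxK` is again minimal,
and Brauer's lemma puts a nonzero idempotent in it. For `z ∈ J(aRa)` such an idempotent `zt`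
yields, since `ca` is a left identity on `aRa` and `ab` a right one, the idempotent
`zt·ca = z·(a(btc)a)`; quasi-regularity of `z` kills it, and then `zt = zt·ca·zt = 0`.
-/

namespace IsRightIdeal

variable {R : Type*} [Ring R] {K : Set R}

theorem singleton_zero : IsRightIdeal ({0} : Set R) := by
  refine ⟨rfl, ?_, ?_, ?_⟩ <;> intros <;> simp_all

theorem sub_mem (hK : IsRightIdeal K) {x y : R} (hx : x ∈ K) (hy : y ∈ K) : x - y ∈ K := by
  rw [sub_eq_add_neg]
  exact hK.2.1 x hx (-y) (hK.2.2.1 y hy)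

theorem image_mulLeft (hK : IsRightIdeal K) (u : R) : IsRightIdeal ((u * ·) '' K) := by
  refine ⟨⟨0, hK.1, mul_zero u⟩, ?_, ?_, ?_⟩
  · rintro _ ⟨x, hx, rfl⟩ _ ⟨y, hy, rfl⟩
    exact ⟨x + y, hK.2.1 x hx y hy, mul_add u x y⟩
  · rintro _ ⟨x, hx, rfl⟩
    exact ⟨-x, hK.2.2.1 x hx, mul_neg u x⟩
  · rintro _ ⟨x, hx, rfl⟩ r
    exact ⟨x * r, hK.2.2.2 x hx r, (mul_assoc u x r).symm⟩

theorem inter_preimage_mulLeft (hK : IsRightIdeal K) {L : Set R} (hL : IsRightIdeal L) (u : R) :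
    IsRightIdeal (K ∩ (u * ·) ⁻¹' L) := by
  refine ⟨⟨hK.1, show u * 0 ∈ L by simpa using hL.1⟩, ?_, ?_, ?_⟩
  · rintro x ⟨hxK, hxL⟩ y ⟨hyK, hyL⟩
    exact ⟨hK.2.1 x hxK y hyK, show u * (x + y) ∈ L by simpa [mul_add] using hL.2.1 _ hxL _ hyL⟩
  · rintro x ⟨hxK, hxL⟩
    exact ⟨hK.2.2.1 x hxK, show u * -x ∈ L by simpa [mul_neg] using hL.2.2.1 _ hxL⟩
  · rintro x ⟨hxK, hxL⟩ r
    exact ⟨hK.2.2.2 x hxK r, show u * (x * r) ∈ L by simpa [mul_assoc] using hL.2.2.2 _ hxL r⟩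

end IsRightIdeal

namespace IsMinimalRightIdeal

variable {R : Type*} [Ring R] {K : Set R}

theorem image_mulLeft (hK : IsMinimalRightIdeal K) {u : R} (hu : (u * ·) '' K ≠ {0}) :
    IsMinimalRightIdeal ((u * ·) '' K) := by
  refine ⟨hK.1.image_mulLeft u, hu, fun L hL hLu => ?_⟩
  rcases hK.2.2 _ (hK.1.inter_preimage_mulLeft hL u) Set.inter_subset_left with h | h
  · refine .inl (Set.eq_singleton_iff_unique_mem.2 ⟨hL.1, ?_⟩)
    intro _ hx
    obtain ⟨k, hk, rfl⟩ := hLu hx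
    have hk0 : k ∈ K ∩ (u * ·) ⁻¹' L := ⟨hk, hx⟩
    rw [h, Set.mem_singleton_iff] at hk0
    simp [hk0]
  · refine .inr (hLu.antisymm ?_)
    rintro _ ⟨k, hk, rfl⟩
    rw [← h] at hk
    exact hk.2

/-- Brauer's lemma. -/
theorem exists_isIdempotentElem (hR : IsSemiprime R) (hK : IsMinimalRightIdeal K) :
    ∃ e ∈ K, IsIdempotentElem e ∧ e ≠ 0 := by
  obtain ⟨hKr, hK0, hKmin⟩ := hK
  obtain ⟨l, hl, k, hk, hlk⟩ : ∃ l ∈ K, ∃ k ∈ K, l * k ≠ 0 := by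
    by_contra! h
    exact hK0 (Set.eq_singleton_iff_unique_mem.2
      ⟨hKr.1, fun l hl => hR l fun r => h (l * r) (hKr.2.2.2 l hl r) l hl⟩)
  have hlK : (l * ·) '' K = K := by
    refine (hKmin _ (hKr.image_mulLeft l) ?_).resolve_left fun h => hlk ?_
    · rintro _ ⟨x, hx, rfl⟩
      exact hKr.2.2.2 l hl x
    · simpa [h] using Set.mem_image_of_mem (l * ·) hk
  obtain ⟨e, he, hle : l * e = l⟩ : l ∈ (l * ·) '' K := hlK.symm ▸ hl
  have hann : K ∩ (l * ·) ⁻¹' {0} = {0} := by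
    refine (hKmin _ (hKr.inter_preimage_mulLeft IsRightIdeal.singleton_zero l)
      Set.inter_subset_left).resolve_right fun h => hlk ?_
    rw [← h] at hk
    exact hk.2
  have hee : e * e - e ∈ K ∩ (l * ·) ⁻¹' {0} := by
    refine ⟨hKr.sub_mem (hKr.2.2.2 e he e) he, ?_⟩
    change l * (e * e - e) = 0
    rw [mul_sub, ← mul_assoc, hle, hle, sub_self]
  rw [hann, Set.mem_singleton_iff, sub_eq_zero] at hee
  refine ⟨e, he, hee, ?_⟩
  rintro rfl
  rw [mul_zero] at hle
  exact hlk (by rw [← hle, zero_mul])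

end IsMinimalRightIdeal

section

variable {R : Type*} [Ring R]

theorem exists_mul_ne_zero_of_mem_rightSocle {u z : R} (hz : z ∈ rightSocle R) (huz : u * z ≠ 0) :
    ∃ K, IsMinimalRightIdeal K ∧ ∃ k ∈ K, u * k ≠ 0 := by
  by_contra! h
  exact huz ((AddSubgroup.closure_le (AddMonoidHom.mulLeft u).ker).2
    (Set.iUnion₂_subset fun K hK k hk => h K hK k hk) hz)

theorem exists_isIdempotentElem_mul_of_mem_rightSocle (hR : IsSemiprime R) {z : R}
    (hz : z ∈ rightSocle R) (hz0 : z ≠ 0) : ∃ t, IsIdempotentElem (z * t) ∧ z * t ≠ 0 := by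
  obtain ⟨x, hx⟩ : ∃ x, z * x * z ≠ 0 := by
    by_contra! h
    exact hz0 (hR z h)
  obtain ⟨K, hK, k, hk, hxk⟩ := exists_mul_ne_zero_of_mem_rightSocle hz hx
  have hL : IsMinimalRightIdeal ((z * x * ·) '' K) :=
    hK.image_mulLeft fun h => hxk (by simpa [h] using Set.mem_image_of_mem (z * x * ·) hk)
  obtain ⟨_, ⟨k', -, rfl⟩, he, he0⟩ := hL.exists_isIdempotentElem hR
  exact ⟨x * k', by simpa only [mul_assoc] using And.intro he he0⟩

theorem mul_eq_zero_of_mem_jacobsonOfSubset {A : Set R} {x r : R} (hx : x ∈ jacobsonOfSubset A)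
    (hr : r ∈ A) (he : IsIdempotentElem (x * r)) : x * r = 0 := by
  obtain ⟨y, -, hy⟩ := hx.2 r hr
  calc x * r = x * r * (x * r + y - x * r * y) := by
        rw [mul_sub, mul_add, he.eq, ← mul_assoc, he.eq, add_sub_cancel_right]
    _ = 0 := by rw [hy, mul_zero]

theorem zero_mem_jacobsonOfSubset {A : Set R} (hA : (0 : R) ∈ A) : (0 : R) ∈ jacobsonOfSubset A :=
  ⟨hA, fun _ _ => ⟨0, hA, by simp⟩⟩

end

theorem jacobson_aRa_eq_zero_general {R : Type*} [Ring R] (hR : IsSemiprime R)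
    (a b c : R)
    (hb : a = a * a * b) (hc : a = c * (a * a))
    (hsoc : ∀ x : R, a * x * a ∈ rightSocle R) :
    jacobsonOfSubset {x : R | ∃ r : R, x = a * r * a} = {0} := by
  refine Set.eq_singleton_iff_unique_mem.2 ⟨zero_mem_jacobsonOfSubset ⟨0, by simp⟩, ?_⟩
  intro z hz
  obtain ⟨s, hs⟩ := hz.1
  by_contra hz0
  obtain ⟨t, he, he0⟩ := exists_isIdempotentElem_mul_of_mem_rightSocle hR (hs ▸ hsoc s) hz0
  have hca : c * a * (z * t) = z * t := by
    rw [hs, show c * a * (a * s * a * t) = c * (a * a) * (s * a * t) by noncomm_ring, ← hc]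
    noncomm_ring
  have hab : z * (a * (b * t * c) * a) = z * t * (c * a) := by
    rw [hs, show a * s * a * (a * (b * t * c) * a) = a * s * (a * a * b) * t * (c * a) by
      noncomm_ring, ← hb]
  have hg : IsIdempotentElem (z * t * (c * a)) := by
    rw [IsIdempotentElem, ← mul_assoc, mul_assoc (z * t) (c * a) (z * t), hca, he.eq]
  have hg0 := mul_eq_zero_of_mem_jacobsonOfSubset hz ⟨b * t * c, rfl⟩ (hab ▸ hg)
  rw [hab] at hg0
  apply he0
  calc z * t = z * t * (c * a * (z * t)) := by rw [hca, he.eq]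
    _ = 0 := by rw [← mul_assoc, hg0, zero_mul]

/-- If `R` is semiprime, `a` is regular, `a = a²b = ca²` for some `b, c ∈ R`, and
`a*x*a ∈ soc R` for all `x ∈ R`, then `J(aRa) = 0`. -/
theorem jacobson_aRa_eq_zero {R : Type*} [Ring R] (hR : IsSemiprime R)
    (a d b c : R) (hd : a * d * a = a)
    (hb : a = a * a * b) (hc : a = c * (a * a))
    (hsoc : ∀ x : R, a * x * a ∈ rightSocle R) :
    jacobsonOfSubset {x : R | ∃ r : R, x = a * r * a} = {0} :=
  jacobson_aRa_eq_zero_general hR a b c hb hc hsoc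
end

section
/- Let R be a unital ring and f ∈ R an idempotent such that f = f₁ + ⋯ + fₙ for pairwise orthogonal idempotents fᵢ each of which generates a minimal right ideal fᵢR. Then for every right ideal K of R, (f) ∩ K = K·(f), where (f) is the two-sided ideal generated by f. -/
/-- The product `K · I` of a right ideal `K` (as a set) and an ideal `I` (as a set):
finite sums of products `k * x` with `k ∈ K`, `x ∈ I`. -/
def setProd {R : Type*} [Ring R] (K I : Set R) : Set R :=
  (AddSubgroup.closure {y : R | ∃ k ∈ K, ∃ x ∈ I, y = k * x} : AddSubgroup R)

/-!
Call `t` a right unit of `x` if `x t = x`. The elements `a` such that every element of `aR` has a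
right unit in `(f)` form a two-sided ideal: closure under left multiplication is immediate, and
for sums one combines right units `t₁, t₂` into `t₁ + t₂ - t₁ t₂`. Each `fᵢ` lies in this ideal,
because `fᵢ s ≠ 0` generates the minimal right ideal `fᵢR`, so `fᵢ = fᵢ s r` and `r fᵢ s ∈ (f)` is a
right unit of `fᵢ s`. Hence every `a ∈ (f) ∩ K` satisfies `a = a t` with `t ∈ (f)`, so `a ∈ K·(f)`.
-/

section

variable {R : Type*} [Ring R]

def HasRightUnitIn (I : TwoSidedIdeal R) (x : R) : Prop :=
  ∃ t ∈ I, x * t = x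

lemma HasRightUnitIn.of_eq_zero {I : TwoSidedIdeal R} {x : R} (hx : x = 0) :
    HasRightUnitIn I x :=
  ⟨0, zero_mem I, by rw [hx, zero_mul]⟩

/-- The right unit `t₁ + t₂ - t₁ t₂` works since `1 - (t₁ + t₂ - t₁ t₂) = (1 - t₁)(1 - t₂)`. -/
lemma HasRightUnitIn.add {I : TwoSidedIdeal R} {x y t₁ : R} (ht₁ : t₁ ∈ I) (hx : x * t₁ = x)
    (hy : HasRightUnitIn I (y * (1 - t₁))) : HasRightUnitIn I (x + y) := by
  obtain ⟨t₂, ht₂, hyt₂⟩ := hy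
  refine ⟨t₁ + t₂ - t₁ * t₂, sub_mem (add_mem ht₁ ht₂) (I.mul_mem_right _ _ ht₁), ?_⟩
  simp only [mul_sub, mul_one, sub_mul] at hyt₂
  calc (x + y) * (t₁ + t₂ - t₁ * t₂)
      = (x * t₁ + x * t₂ - x * t₁ * t₂) + (y * t₁ + (y * t₂ - y * t₁ * t₂)) := by noncomm_ring
    _ = x + y := by rw [hx, hyt₂]; abel

def rightUnitalIdeal (I : TwoSidedIdeal R) : TwoSidedIdeal R :=
  TwoSidedIdeal.mk' {a | ∀ s, HasRightUnitIn I (a * s)}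
    (fun s => .of_eq_zero (zero_mul s))
    (fun {a b} ha hb s => by
      obtain ⟨t, ht, hat⟩ := ha s
      rw [add_mul]
      exact .add ht hat (by rw [mul_assoc]; exact hb _))
    (fun {a} ha s => by
      obtain ⟨t, ht, hat⟩ := ha s
      exact ⟨t, ht, by rw [neg_mul, neg_mul, hat]⟩)
    (fun {r a} ha s => by
      obtain ⟨t, ht, hat⟩ := ha s
      exact ⟨t, ht, by rw [mul_assoc r a s, mul_assoc r, hat]⟩)
    (fun {a r} ha s => by rw [mul_assoc]; exact ha _)

lemma mem_rightUnitalIdeal {I : TwoSidedIdeal R} {a : R} :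
    a ∈ rightUnitalIdeal I ↔ ∀ s, HasRightUnitIn I (a * s) :=
  TwoSidedIdeal.mem_mk' _ _ _ _ _ _ _

lemma isRightIdeal_principal (a : R) : IsRightIdeal {x : R | ∃ r, x = a * r} :=
  ⟨⟨0, (mul_zero a).symm⟩,
    fun _ ⟨r, hr⟩ _ ⟨r', hr'⟩ => ⟨r + r', by rw [hr, hr', mul_add]⟩,
    fun _ ⟨r, hr⟩ => ⟨-r, by rw [hr, mul_neg]⟩,
    fun _ ⟨r, hr⟩ s => ⟨r * s, by rw [hr, mul_assoc]⟩⟩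

lemma IsMinimalRightIdeal.subset_principal {M : Set R} (hM : IsMinimalRightIdeal M) {b : R}
    (hb : b ∈ M) (hb0 : b ≠ 0) : M ⊆ {x : R | ∃ r, x = b * r} := by
  have hbM : {x : R | ∃ r, x = b * r} ⊆ M := fun _ ⟨r, hr⟩ => hr ▸ hM.1.2.2.2 b hb r
  rcases hM.2.2 _ (isRightIdeal_principal b) hbM with h0 | h
  · exact absurd (h0 ▸ ⟨1, (mul_one b).symm⟩ : b ∈ ({0} : Set R)) hb0
  · exact h.symm.subset

lemma mem_rightUnitalIdeal_of_isMinimalRightIdeal {I : TwoSidedIdeal R} {e : R} (he : e ∈ I)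
    (he2 : e * e = e)
    (hmin : IsMinimalRightIdeal {x : R | ∃ r, x = e * r}) : e ∈ rightUnitalIdeal I := by
  refine mem_rightUnitalIdeal.2 fun s => ?_
  by_cases hs : e * s = 0
  · exact .of_eq_zero hs
  obtain ⟨r, hr⟩ := hmin.subset_principal ⟨s, rfl⟩ hs ⟨1, (mul_one e).symm⟩
  refine ⟨r * e * s, I.mul_mem_right _ _ (I.mul_mem_left _ _ he), ?_⟩
  rw [← mul_assoc, ← mul_assoc, ← hr, he2]

lemma HasRightUnitIn.mem_setProd {I : TwoSidedIdeal R} {K : Set R} {x : R}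
    (hx : HasRightUnitIn I x) (hxK : x ∈ K) : x ∈ setProd K I := by
  obtain ⟨t, ht, hxt⟩ := hx
  exact AddSubgroup.subset_closure ⟨x, hxK, t, ht, hxt.symm⟩

lemma setProd_subset_inter {K : Set R} (hK : IsRightIdeal K) (I : TwoSidedIdeal R) :
    setProd K I ⊆ (I : Set R) ∩ K := by
  obtain ⟨hK0, hKadd, hKneg, hKmul⟩ := hK
  intro x hx
  induction hx using AddSubgroup.closure_induction with
  | mem _ h =>
    obtain ⟨k, hk, t, ht, rfl⟩ := h
    exact ⟨I.mul_mem_left _ _ ht, hKmul k hk t⟩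
  | zero => exact ⟨zero_mem I, hK0⟩
  | add _ _ _ _ hy hz => exact ⟨add_mem hy.1 hz.1, hKadd _ hy.2 _ hz.2⟩
  | neg _ _ hy => exact ⟨neg_mem hy.1, hKneg _ hy.2⟩

lemma mem_span_sum_of_orthogonal {n : ℕ} (g : Fin n → R) (hidem : ∀ i, g i * g i = g i)
    (horth : ∀ i j, i ≠ j → g i * g j = 0) (i : Fin n) :
    g i ∈ TwoSidedIdeal.span {∑ j, g j} := by
  have h : (∑ j, g j) * g i = g i := by
    rw [Finset.sum_mul, Finset.sum_eq_single i (fun j _ hj => horth j i hj) (by simp), hidem]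
  rw [← h]
  exact TwoSidedIdeal.mul_mem_right _ _ _ (TwoSidedIdeal.subset_span rfl)

end

theorem ideal_cap_right_ideal_general {R : Type*} [Ring R] (f : R)
    (n : ℕ) (g : Fin n → R) (hsum : f = ∑ i, g i)
    (hidem : ∀ i, g i * g i = g i)
    (horth : ∀ i j, i ≠ j → g i * g j = 0)
    (hmin : ∀ i, IsMinimalRightIdeal {x : R | ∃ r : R, x = g i * r})
    (K : Set R) (hK : IsRightIdeal K) :
    (TwoSidedIdeal.span {f} : Set R) ∩ K = setProd K (TwoSidedIdeal.span {f} : Set R) := by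
  subst hsum
  set I := TwoSidedIdeal.span {∑ i, g i}
  have hfI : ∑ i, g i ∈ rightUnitalIdeal I := sum_mem fun i _ =>
    mem_rightUnitalIdeal_of_isMinimalRightIdeal (mem_span_sum_of_orthogonal g hidem horth i)
      (hidem i) (hmin i)
  have hI : I ≤ rightUnitalIdeal I := TwoSidedIdeal.span_le.2 (Set.singleton_subset_iff.2 hfI)
  refine Set.Subset.antisymm (fun a ⟨haI, haK⟩ => ?_) (setProd_subset_inter hK I)
  have ha : HasRightUnitIn I a := by simpa only [mul_one] using mem_rightUnitalIdeal.1 (hI haI) 1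
  exact ha.mem_setProd haK

/-- If the idempotent `f` is a sum of pairwise orthogonal idempotents `fᵢ`, each generating
a minimal right ideal `fᵢR`, then for every right ideal `K` of `R` we have
`(f) ∩ K = K·(f)`, where `(f)` is the two-sided ideal generated by `f`. -/
theorem ideal_cap_right_ideal {R : Type*} [Ring R] (f : R) (hf : f * f = f)
    (n : ℕ) (g : Fin n → R) (hsum : f = ∑ i, g i)
    (hidem : ∀ i, g i * g i = g i)
    (horth : ∀ i j, i ≠ j → g i * g j = 0)
    (hmin : ∀ i, IsMinimalRightIdeal {x : R | ∃ r : R, x = g i * r})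
    (K : Set R) (hK : IsRightIdeal K) :
    (TwoSidedIdeal.span {f} : Set R) ∩ K = setProd K (TwoSidedIdeal.span {f} : Set R) :=
  ideal_cap_right_ideal_general f n g hsum hidem horth hmin K hK
end

section
/- Let R be a unital ring and e, f₀, f₁, f₂ ∈ R pairwise orthogonal-compatible idempotents with e = f₀ + f₁ + f₂, f₀f₁ = f₁f₀ = f₀f₂ = f₂f₀ = f₁f₂ = f₂f₁ = 0, and f₁Rf₂ = f₂Rf₁ = 0. Set f = f₁ + f₂ and consider the ring S = (eRe, ∗) with x ∗ y = xfy. Then for j ∈ {1,2}, the two-sided ideal Iⱼ of S generated by fⱼ equals fⱼRfⱼ + fⱼRf₀ + f₀Rfⱼ + f₀RfⱼRf₀, and Nⱼ = fⱼRf₀ + f₀Rfⱼ + f₀RfⱼRf₀ is an ideal of Iⱼ satisfying Iⱼ ∗ Nⱼ ∗ Iⱼ = 0 (so Nⱼ³ = 0 in S). -/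
/-- `I` is a two-sided ideal of the (generally non-unital) ring on the subset `S` of `R`
with deformed multiplication `x ∗ y = x * f * y`. -/
def IsIdealIn {R : Type*} [Ring R] (f : R) (S I : Set R) : Prop :=
  I ⊆ S ∧ (0 : R) ∈ I ∧ (∀ x ∈ I, ∀ y ∈ I, x + y ∈ I) ∧ (∀ x ∈ I, -x ∈ I) ∧
    ∀ x ∈ I, ∀ y ∈ S, x * f * y ∈ I ∧ y * f * x ∈ I

/-- The two-sided ideal of the ring `(S, ∗)`, `x ∗ y = x * f * y`, generated by `g`. -/
def genIdealIn {R : Type*} [Ring R] (f : R) (S : Set R) (g : R) : Set R :=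
  ⋂₀ {I : Set R | IsIdealIn f S I ∧ g ∈ I}

/-- The conclusion of the key lemma for a single index `j`: in `S = (eRe, ∗)` with
`x ∗ y = x * f * y`, the ideal `Iⱼ` generated by `fⱼ` equals
`fⱼRfⱼ + fⱼRf₀ + f₀Rfⱼ + f₀RfⱼRf₀`, and `Nⱼ = fⱼRf₀ + f₀Rfⱼ + f₀RfⱼRf₀` is an ideal of
`Iⱼ` with `Iⱼ ∗ Nⱼ ∗ Iⱼ = 0` (hence `Nⱼ³ = 0` in `S`). -/
def CornerIdealConcl {R : Type*} [Ring R] (e f₀ fj f : R) : Prop :=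
  letI S : Set R := {x : R | e * x * e = x}
  letI Ij : Set R := genIdealIn f S fj
  letI Nj : Set R := (AddSubgroup.closure
      ({x : R | ∃ r : R, x = fj * r * f₀} ∪ {x : R | ∃ r : R, x = f₀ * r * fj} ∪
        {x : R | ∃ r s : R, x = f₀ * r * fj * s * f₀}) : AddSubgroup R)
  Ij = (AddSubgroup.closure
      ({x : R | ∃ r : R, x = fj * r * fj} ∪ {x : R | ∃ r : R, x = fj * r * f₀} ∪
        {x : R | ∃ r : R, x = f₀ * r * fj} ∪
        {x : R | ∃ r s : R, x = f₀ * r * fj * s * f₀}) : AddSubgroup R) ∧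
  Nj ⊆ Ij ∧ (∀ x ∈ Ij, ∀ y ∈ Nj, x * f * y ∈ Nj ∧ y * f * x ∈ Nj) ∧
  (∀ x ∈ Ij, ∀ y ∈ Nj, ∀ z ∈ Ij, x * f * y * f * z = 0) ∧
  (∀ x ∈ Nj, ∀ y ∈ Nj, ∀ z ∈ Nj, x * f * y * f * z = 0)

/-!
In `S = (eRe, ∗)` we have `x ∗ fⱼ ∗ y = x fⱼ y`, so the ideal generated by `fⱼ` is the additive
span of `e R fⱼ R e`. Since `fₖ R fⱼ = fⱼ R fₖ = 0`, the Peirce expansions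
`e r fⱼ = f₀ r fⱼ + fⱼ r fⱼ` and `fⱼ r e = fⱼ r f₀ + fⱼ r fⱼ` identify this span with
`fⱼRfⱼ + fⱼRf₀ + f₀Rfⱼ + f₀RfⱼRf₀`. Every generator of `Nⱼ` begins or ends with `f₀`, and
`f f₀ = f₀ f = 0`, so `f Nⱼ f = 0`; this gives `Iⱼ ∗ Nⱼ ∗ Iⱼ = 0` at once.
-/

section CornerRing

variable {R : Type*} [Ring R]

theorem mul_mul_mem_of_mem_closure {s t : Set R} {G : AddSubgroup R} {a x y : R}
    (h : ∀ x ∈ s, ∀ y ∈ t, x * a * y ∈ G)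
    (hx : x ∈ AddSubgroup.closure s) (hy : y ∈ AddSubgroup.closure t) : x * a * y ∈ G := by
  induction hx using AddSubgroup.closure_induction with
  | mem x hx =>
    induction hy using AddSubgroup.closure_induction with
    | mem y hy => exact h x hx y hy
    | zero => simpa only [mul_zero] using G.zero_mem
    | add y z _ _ hy hz => simpa only [mul_add] using G.add_mem hy hz
    | neg y _ hy => simpa only [mul_neg] using G.neg_mem hy
  | zero => simpa only [zero_mul] using G.zero_mem
  | add x z _ _ hx hz => simpa only [add_mul] using G.add_mem hx hz
  | neg x _ hx => simpa only [neg_mul] using G.neg_mem hx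

def IsIdealIn.toAddSubgroup {f : R} {S I : Set R} (hI : IsIdealIn f S I) : AddSubgroup R where
  carrier := I
  add_mem' ha hb := hI.2.2.1 _ ha _ hb
  zero_mem' := hI.2.1
  neg_mem' ha := hI.2.2.2.1 _ ha

def sandwichSpan (e g : R) : AddSubgroup R :=
  AddSubgroup.closure {x : R | ∃ r s : R, x = e * r * g * s * e}

section Sandwich

variable {e g f : R}

theorem sandwich_mem_sandwichSpan (r s : R) : e * r * g * s * e ∈ sandwichSpan e g :=
  AddSubgroup.subset_closure ⟨r, s, rfl⟩

theorem mem_sandwichSpan_of_eq_mul_mul {x : R} (hx : e * x * e = x) {a b : R} (h : x = a * g * b) :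
    x ∈ sandwichSpan e g := by
  convert sandwich_mem_sandwichSpan a b using 1
  rw [← hx, h]
  simp only [mul_assoc]

theorem sandwichSpan_subset_corner (he : e * e = e) :
    (sandwichSpan e g : Set R) ⊆ {x | e * x * e = x} := by
  intro x hx
  induction hx using AddSubgroup.closure_induction with
  | mem x hx =>
    obtain ⟨r, s, rfl⟩ := hx
    show e * (e * r * g * s * e) * e = e * r * g * s * e
    simp only [← mul_assoc, he]
    simp only [mul_assoc, he]
  | zero => simp
  | add x y _ _ hx hy =>
    show e * (x + y) * e = x + y
    rw [mul_add, add_mul, hx, hy]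
  | neg x _ hx =>
    show e * -x * e = -x
    rw [mul_neg, neg_mul, hx]

theorem isIdealIn_sandwichSpan (he : e * e = e) :
    IsIdealIn f {x | e * x * e = x} (sandwichSpan e g) := by
  refine ⟨sandwichSpan_subset_corner he, zero_mem _, fun _ hx _ hy => add_mem hx hy,
    fun _ hx => neg_mem hx, fun x hx y (hy : e * y * e = y) => ⟨?_, ?_⟩⟩
  · refine mul_mul_mem_of_mem_closure (t := {x | e * x * e = x}) ?_ hx
      (AddSubgroup.subset_closure hy)
    rintro _ ⟨r, s, rfl⟩ y (hy : e * y * e = y)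
    have hye : y * e = y := by rw [← hy, mul_assoc, he]
    rw [← hye]
    convert sandwich_mem_sandwichSpan r (s * e * f * y) using 1
    simp only [mul_assoc]
  · refine mul_mul_mem_of_mem_closure (s := {x | e * x * e = x}) ?_
      (AddSubgroup.subset_closure hy) hx
    rintro y (hy : e * y * e = y) _ ⟨r, s, rfl⟩
    have hey : e * y = y := by rw [← hy]; simp only [← mul_assoc, he]
    rw [← hey]
    convert sandwich_mem_sandwichSpan (y * f * e * r) s using 1
    simp only [mul_assoc]

theorem sandwich_mem_of_isIdealIn (he : e * e = e) (hfg : f * g = g) (hgf : g * f = g)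
    (heg : e * g = g) (hge : g * e = g) {I : Set R} (hI : IsIdealIn f {x | e * x * e = x} I)
    (hg : g ∈ I) (r s : R) : e * r * g * s * e ∈ I := by
  have hcorner (a : R) : e * (e * a * e) * e = e * a * e := by
    simp only [← mul_assoc, he]; simp only [mul_assoc, he]
  have := (hI.2.2.2.2 _ (hI.2.2.2.2 g hg _ (hcorner r)).2 _ (hcorner s)).1
  rwa [show e * r * e * f * g * f * (e * s * e) = e * r * (e * (f * g * f) * e) * s * e by
    simp only [mul_assoc], hfg, hgf, heg, hge] at this

theorem genIdealIn_eq_sandwichSpan (he : e * e = e) (hfg : f * g = g) (hgf : g * f = g)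
    (heg : e * g = g) (hge : g * e = g) :
    genIdealIn f {x | e * x * e = x} g = sandwichSpan e g := by
  have hg : g ∈ sandwichSpan e g := by
    simpa only [mul_one, heg, hge] using sandwich_mem_sandwichSpan (e := e) (g := g) 1 1
  apply Set.Subset.antisymm
  · exact Set.sInter_subset_of_mem (t := (sandwichSpan e g : Set R))
      ⟨isIdealIn_sandwichSpan he, hg⟩
  rintro x hx I ⟨hI, hgI⟩
  refine (AddSubgroup.closure_le (K := hI.toAddSubgroup)).2 ?_ hx
  rintro _ ⟨r, s, rfl⟩
  exact sandwich_mem_of_isIdealIn he hfg hgf heg hge hI hgI r s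

end Sandwich

def cornerIdeal (f₀ fj : R) : AddSubgroup R :=
  AddSubgroup.closure
    ({x : R | ∃ r : R, x = fj * r * fj} ∪ {x : R | ∃ r : R, x = fj * r * f₀} ∪
      {x : R | ∃ r : R, x = f₀ * r * fj} ∪ {x : R | ∃ r s : R, x = f₀ * r * fj * s * f₀})

def cornerNilIdeal (f₀ fj : R) : AddSubgroup R :=
  AddSubgroup.closure
    ({x : R | ∃ r : R, x = fj * r * f₀} ∪ {x : R | ∃ r : R, x = f₀ * r * fj} ∪
      {x : R | ∃ r s : R, x = f₀ * r * fj * s * f₀})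

section Corner

variable {e f₀ fj fk f : R}

theorem cornerNilIdeal_j0_mem (r : R) : fj * r * f₀ ∈ cornerNilIdeal f₀ fj :=
  AddSubgroup.subset_closure (.inl (.inl ⟨r, rfl⟩))

theorem cornerNilIdeal_0j_mem (r : R) : f₀ * r * fj ∈ cornerNilIdeal f₀ fj :=
  AddSubgroup.subset_closure (.inl (.inr ⟨r, rfl⟩))

theorem cornerNilIdeal_0j0_mem (r s : R) : f₀ * r * fj * s * f₀ ∈ cornerNilIdeal f₀ fj :=
  AddSubgroup.subset_closure (.inr ⟨r, s, rfl⟩)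

theorem cornerNilIdeal_le_cornerIdeal : cornerNilIdeal f₀ fj ≤ cornerIdeal f₀ fj := by
  refine AddSubgroup.closure_mono ?_
  rintro x ((h | h) | h)
  exacts [.inl (.inl (.inr h)), .inl (.inr h), .inr h]

theorem cornerIdeal_jj_mem (r : R) : fj * r * fj ∈ cornerIdeal f₀ fj :=
  AddSubgroup.subset_closure (.inl (.inl (.inl ⟨r, rfl⟩)))

theorem peirce_expand_left (hsum : e = f₀ + fj + fk) (hkj : ∀ r, fk * r * fj = 0) (r : R) :
    e * r * fj = f₀ * r * fj + fj * r * fj := by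
  rw [hsum, add_mul, add_mul, add_mul, add_mul, hkj, add_zero]

theorem peirce_expand_right (hsum : e = f₀ + fj + fk) (hjk : ∀ r, fj * r * fk = 0) (r : R) :
    fj * r * e = fj * r * f₀ + fj * r * fj := by
  rw [hsum, mul_add, mul_add, hjk, add_zero]

theorem sandwich_e_f₀_mem_cornerNilIdeal (hsum : e = f₀ + fj + fk)
    (hkj : ∀ r, fk * r * fj = 0) (r s : R) : e * r * fj * s * f₀ ∈ cornerNilIdeal f₀ fj := by
  rw [peirce_expand_left hsum hkj, add_mul, add_mul]
  refine add_mem (cornerNilIdeal_0j0_mem r s) ?_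
  simpa only [mul_assoc] using cornerNilIdeal_j0_mem (f₀ := f₀) (r * fj * s)

theorem sandwich_f₀_e_mem_cornerNilIdeal (hsum : e = f₀ + fj + fk)
    (hjk : ∀ r, fj * r * fk = 0) (r s : R) : f₀ * r * fj * s * e ∈ cornerNilIdeal f₀ fj := by
  rw [show f₀ * r * fj * s * e = f₀ * r * (fj * s * e) by simp only [mul_assoc],
    peirce_expand_right hsum hjk, mul_add]
  refine add_mem (by simpa only [mul_assoc] using cornerNilIdeal_0j0_mem r s) ?_
  simpa only [mul_assoc] using cornerNilIdeal_0j_mem (fj := fj) (r * fj * s)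

theorem sandwichSpan_le_cornerIdeal (hsum : e = f₀ + fj + fk) (hkj : ∀ r, fk * r * fj = 0)
    (hjk : ∀ r, fj * r * fk = 0) : sandwichSpan e fj ≤ cornerIdeal f₀ fj := by
  refine (AddSubgroup.closure_le _).2 ?_
  rintro _ ⟨r, s, rfl⟩
  rw [show e * r * fj * s * e = e * r * (fj * s * e) by simp only [mul_assoc],
    peirce_expand_right hsum hjk, mul_add]
  refine add_mem (cornerNilIdeal_le_cornerIdeal
    (by simpa only [mul_assoc] using sandwich_e_f₀_mem_cornerNilIdeal hsum hkj r s)) ?_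
  rw [show e * r * (fj * s * fj) = e * r * fj * s * fj by simp only [mul_assoc],
    peirce_expand_left hsum hkj, add_mul, add_mul]
  refine add_mem (cornerNilIdeal_le_cornerIdeal ?_) ?_
  · simpa only [mul_assoc] using cornerNilIdeal_0j_mem (fj := fj) (f₀ := f₀) (r * fj * s)
  · simpa only [mul_assoc] using cornerIdeal_jj_mem (fj := fj) (f₀ := f₀) (r * fj * s)

theorem cornerIdeal_le_sandwichSpan (hej : e * fj = fj) (hje : fj * e = fj) (he0 : e * f₀ = f₀)
    (h0e : f₀ * e = f₀) : cornerIdeal f₀ fj ≤ sandwichSpan e fj := by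
  have hcorner {a b : R} (ha : e * a = a) (hb : b * e = b) (y : R) :
      e * (a * y * b) * e = a * y * b := by
    simp only [← mul_assoc, ha]; simp only [mul_assoc, hb]
  refine (AddSubgroup.closure_le _).2 ?_
  rintro _ (((⟨r, rfl⟩ | ⟨r, rfl⟩) | ⟨r, rfl⟩) | ⟨r, s, rfl⟩)
  · exact mem_sandwichSpan_of_eq_mul_mul (hcorner hej hje r) (a := fj * r) (b := 1)
      (by rw [mul_one])
  · exact mem_sandwichSpan_of_eq_mul_mul (hcorner hej h0e r) (a := 1) (b := r * f₀)
      (by simp only [one_mul, mul_assoc])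
  · exact mem_sandwichSpan_of_eq_mul_mul (hcorner he0 hje r) (a := f₀ * r) (b := 1)
      (by rw [mul_one])
  · simpa only [mul_assoc, SetLike.mem_coe] using
      mem_sandwichSpan_of_eq_mul_mul (hcorner he0 h0e (r * fj * s)) (a := f₀ * r) (b := s * f₀)
        (by simp only [mul_assoc])

theorem mul_mul_eq_zero_of_mem_cornerNilIdeal (hf0 : f * f₀ = 0) (h0f : f₀ * f = 0) {y : R}
    (hy : y ∈ cornerNilIdeal f₀ fj) : f * y * f = 0 := by
  suffices cornerNilIdeal f₀ fj ≤
      ((AddMonoidHom.mulRight f).comp (AddMonoidHom.mulLeft f)).ker from this hy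
  refine (AddSubgroup.closure_le _).2 ?_
  rintro _ ((⟨r, rfl⟩ | ⟨r, rfl⟩) | ⟨r, s, rfl⟩) <;>
    simp only [SetLike.mem_coe, AddMonoidHom.mem_ker, AddMonoidHom.coe_comp, Function.comp_apply,
      AddMonoidHom.coe_mulLeft, AddMonoidHom.coe_mulRight]
  · simp only [mul_assoc, h0f, mul_zero]
  · simp only [← mul_assoc, hf0, zero_mul]
  · simp only [mul_assoc, h0f, mul_zero]

theorem sandwichSpan_mul_cornerNilIdeal_mem (hsum : e = f₀ + fj + fk)
    (hkj : ∀ r, fk * r * fj = 0) (hej : e * fj = fj) (hfj : f * fj = fj) (hf0 : f * f₀ = 0)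
    {x y : R} (hx : x ∈ sandwichSpan e fj) (hy : y ∈ cornerNilIdeal f₀ fj) :
    x * f * y ∈ cornerNilIdeal f₀ fj := by
  refine mul_mul_mem_of_mem_closure ?_ hx hy
  rintro _ ⟨r, s, rfl⟩ _ ((⟨t, rfl⟩ | ⟨t, rfl⟩) | ⟨t, u, rfl⟩)
  · rw [show e * r * fj * s * e * f * (fj * t * f₀) = e * r * fj * (s * (e * (f * fj)) * t) * f₀ by
      simp only [mul_assoc], hfj, hej]
    exact sandwich_e_f₀_mem_cornerNilIdeal hsum hkj r _
  · rw [show e * r * fj * s * e * f * (f₀ * t * fj) = e * r * fj * s * e * (f * f₀) * t * fj by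
      simp only [mul_assoc], hf0, mul_zero, zero_mul, zero_mul]
    exact zero_mem _
  · rw [show e * r * fj * s * e * f * (f₀ * t * fj * u * f₀)
        = e * r * fj * s * e * (f * f₀) * t * fj * u * f₀ by simp only [mul_assoc], hf0]
    simpa only [mul_zero, zero_mul] using zero_mem _

theorem cornerNilIdeal_mul_sandwichSpan_mem (hsum : e = f₀ + fj + fk)
    (hjk : ∀ r, fj * r * fk = 0) (hje : fj * e = fj) (hjf : fj * f = fj) (h0f : f₀ * f = 0)
    {x y : R} (hx : x ∈ sandwichSpan e fj) (hy : y ∈ cornerNilIdeal f₀ fj) :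
    y * f * x ∈ cornerNilIdeal f₀ fj := by
  refine mul_mul_mem_of_mem_closure ?_ hy hx
  rintro _ ((⟨t, rfl⟩ | ⟨t, rfl⟩) | ⟨t, u, rfl⟩) _ ⟨r, s, rfl⟩
  · rw [show fj * t * f₀ * f * (e * r * fj * s * e) = fj * t * (f₀ * f) * (e * r * fj * s * e) by
      simp only [mul_assoc], h0f, mul_zero, zero_mul]
    exact zero_mem _
  · rw [show f₀ * t * fj * f * (e * r * fj * s * e) = f₀ * (t * (fj * f * e) * r) * fj * s * e by
      simp only [mul_assoc], hjf, hje]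
    exact sandwich_f₀_e_mem_cornerNilIdeal hsum hjk _ s
  · rw [show f₀ * t * fj * u * f₀ * f * (e * r * fj * s * e)
        = f₀ * t * fj * u * (f₀ * f) * (e * r * fj * s * e) by simp only [mul_assoc], h0f]
    simpa only [mul_zero, zero_mul] using zero_mem _

end Corner

theorem cornerIdealConcl_of_orthogonal {e f₀ fj fk : R} (he : e * e = e) (h0 : f₀ * f₀ = f₀)
    (hj : fj * fj = fj) (hsum : e = f₀ + fj + fk)
    (h0j : f₀ * fj = 0) (hj0 : fj * f₀ = 0) (h0k : f₀ * fk = 0) (hk0 : fk * f₀ = 0)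
    (hjk : fj * fk = 0) (hkj : fk * fj = 0)
    (hjRk : ∀ r : R, fj * r * fk = 0) (hkRj : ∀ r : R, fk * r * fj = 0) :
    CornerIdealConcl e f₀ fj (fj + fk) := by
  have hej : e * fj = fj := by rw [hsum, add_mul, add_mul, h0j, hj, hkj, zero_add, add_zero]
  have hje : fj * e = fj := by rw [hsum, mul_add, mul_add, hj0, hj, hjk, zero_add, add_zero]
  have he0 : e * f₀ = f₀ := by rw [hsum, add_mul, add_mul, h0, hj0, hk0, add_zero, add_zero]
  have h0e : f₀ * e = f₀ := by rw [hsum, mul_add, mul_add, h0, h0j, h0k, add_zero, add_zero]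
  have hfj : (fj + fk) * fj = fj := by rw [add_mul, hj, hkj, add_zero]
  have hjf : fj * (fj + fk) = fj := by rw [mul_add, hj, hjk, add_zero]
  have hf0 : (fj + fk) * f₀ = 0 := by rw [add_mul, hj0, hk0, add_zero]
  have h0f : f₀ * (fj + fk) = 0 := by rw [mul_add, h0j, h0k, add_zero]
  have hspan : sandwichSpan e fj = cornerIdeal f₀ fj :=
    (sandwichSpan_le_cornerIdeal hsum hkRj hjRk).antisymm
      (cornerIdeal_le_sandwichSpan hej hje he0 h0e)
  have hI : genIdealIn (fj + fk) {x | e * x * e = x} fj = cornerIdeal f₀ fj := by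
    rw [genIdealIn_eq_sandwichSpan he hfj hjf hej hje, hspan]
  have hker := fun y (hy : y ∈ cornerNilIdeal f₀ fj) =>
    mul_mul_eq_zero_of_mem_cornerNilIdeal hf0 h0f hy
  dsimp only [CornerIdealConcl]
  rw [hI]
  refine ⟨rfl, fun _ hy => cornerNilIdeal_le_cornerIdeal hy, fun x hx y hy => ⟨?_, ?_⟩,
    fun x _ y hy z _ => ?_, fun x _ y hy z _ => ?_⟩
  · exact sandwichSpan_mul_cornerNilIdeal_mem hsum hkRj hej hfj hf0 (hspan ▸ hx) hy
  · exact cornerNilIdeal_mul_sandwichSpan_mem hsum hjRk hje hjf h0f (hspan ▸ hx) hy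
  · rw [mul_assoc x, mul_assoc x, hker y hy, mul_zero, zero_mul]
  · rw [mul_assoc x, mul_assoc x, hker y hy, mul_zero, zero_mul]

end CornerRing

/-- Let `e = f₀ + f₁ + f₂` with `f₀, f₁, f₂` pairwise orthogonal idempotents satisfying
`f₁Rf₂ = f₂Rf₁ = 0`, and set `f = f₁ + f₂`. Then in the ring `S = (eRe, ∗)` with
`x ∗ y = x * f * y`, for `j ∈ {1, 2}` the ideal generated by `fⱼ` is
`fⱼRfⱼ + fⱼRf₀ + f₀Rfⱼ + f₀RfⱼRf₀`, and `Nⱼ = fⱼRf₀ + f₀Rfⱼ + f₀RfⱼRf₀` is an ideal of it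
that is annihilated as stated (nilpotent of index at most `3`). -/
theorem corner_ideal_structure {R : Type*} [Ring R] (e f₀ f₁ f₂ : R)
    (he : e * e = e) (h0 : f₀ * f₀ = f₀) (h1 : f₁ * f₁ = f₁) (h2 : f₂ * f₂ = f₂)
    (hsum : e = f₀ + f₁ + f₂)
    (h01 : f₀ * f₁ = 0) (h10 : f₁ * f₀ = 0) (h02 : f₀ * f₂ = 0) (h20 : f₂ * f₀ = 0)
    (h12 : f₁ * f₂ = 0) (h21 : f₂ * f₁ = 0)
    (h1R2 : ∀ r : R, f₁ * r * f₂ = 0) (h2R1 : ∀ r : R, f₂ * r * f₁ = 0) :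
    CornerIdealConcl e f₀ f₁ (f₁ + f₂) ∧ CornerIdealConcl e f₀ f₂ (f₁ + f₂) := by
  refine ⟨cornerIdealConcl_of_orthogonal he h0 h1 hsum h01 h10 h02 h20 h12 h21 h1R2 h2R1, ?_⟩
  rw [add_comm f₁ f₂]
  exact cornerIdealConcl_of_orthogonal he h0 h2 (by rw [hsum, add_right_comm])
    h02 h20 h01 h10 h21 h12 h2R1 h1R2
end

section
/- Let R be a unital ring, I a (non-unital) ring that decomposes as a direct sum of ideals I = K ⊕ L, and suppose I/J(I) is a simple ring. Then K ⊆ J(I) or L ⊆ J(I); in particular if I contains an idempotent f with I generated by f as an ideal of itself and J(I)³ = 0, then I is directly irreducible (one of K, L is zero). -/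
/-!
If neither `K` nor `L` lies in `J(I)`, simplicity of `I/J(I)` gives `J(I) + K = J(I) + L = I`;
since `K * L ⊆ K ∩ L = 0`, every product `(j + k) * (j' + l)` then lies in `J(I)`, contradicting
that `I/J(I)` has nonzero multiplication. For the second part write `f = k + l` with `k ∈ K`,
`l ∈ L`: both summands are idempotent, the one lying in `J(I)` vanishes because the Jacobson
radical contains no nonzero idempotent, so `f` lies in the other summand, which is then all of `I`.
-/

/-- The Jacobson radical of a (possibly non-unital) ring `I`: the set of `x` such that
`x*r` is right quasi-regular for every `r`. -/
def jacobsonNU (I : Type*) [NonUnitalRing I] : Set I :=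
  {x : I | ∀ r : I, ∃ b : I, x * r + b - x * r * b = 0}

section JacobsonNU

variable {I : Type*} [NonUnitalRing I]

lemma exists_quasiInverse_mul_swap {a b : I} (h : ∃ c : I, a * b + c - a * b * c = 0) :
    ∃ d : I, b * a + d - b * a * d = 0 := by
  obtain ⟨c, hc⟩ := h
  refine ⟨b * c * a - b * a, ?_⟩
  calc b * a + (b * c * a - b * a) - b * a * (b * c * a - b * a)
      = b * (a * b + c - a * b * c) * a := by noncomm_ring
    _ = 0 := by rw [hc, mul_zero, zero_mul]

lemma zero_mem_jacobsonNU : (0 : I) ∈ jacobsonNU I := fun _ => ⟨0, by simp⟩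

lemma add_mem_jacobsonNU {x y : I} (hx : x ∈ jacobsonNU I) (hy : y ∈ jacobsonNU I) :
    x + y ∈ jacobsonNU I := by
  intro r
  obtain ⟨b, hb⟩ := hx r
  obtain ⟨c, hc⟩ := hy (r - r * b)
  refine ⟨b + c - b * c, ?_⟩
  calc (x + y) * r + (b + c - b * c) - (x + y) * r * (b + c - b * c)
      = (x * r + b - x * r * b) + (y * (r - r * b) + c - y * (r - r * b) * c)
        - (x * r + b - x * r * b) * c := by noncomm_ring
    _ = 0 := by rw [hb, hc]; simp

lemma neg_mem_jacobsonNU {x : I} (hx : x ∈ jacobsonNU I) : -x ∈ jacobsonNU I := by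
  intro r
  obtain ⟨b, hb⟩ := hx (-r)
  exact ⟨b, by rwa [neg_mul, ← mul_neg]⟩

lemma mul_mem_jacobsonNU_right {x : I} (s : I) (hx : x ∈ jacobsonNU I) :
    x * s ∈ jacobsonNU I := by
  intro r
  obtain ⟨b, hb⟩ := hx (s * r)
  exact ⟨b, by rwa [mul_assoc]⟩

lemma mul_mem_jacobsonNU_left {x : I} (s : I) (hx : x ∈ jacobsonNU I) :
    s * x ∈ jacobsonNU I := by
  intro r
  obtain ⟨d, hd⟩ := exists_quasiInverse_mul_swap (a := x * r) (b := s) <| by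
    obtain ⟨c, hc⟩ := hx (r * s)
    exact ⟨c, by rwa [mul_assoc]⟩
  exact ⟨d, by simpa only [mul_assoc] using hd⟩

variable (I) in
def jacobsonIdealNU : TwoSidedIdeal I :=
  .mk' (jacobsonNU I) zero_mem_jacobsonNU add_mem_jacobsonNU neg_mem_jacobsonNU
    (mul_mem_jacobsonNU_left _) (mul_mem_jacobsonNU_right _)

@[simp]
lemma coe_jacobsonIdealNU : (jacobsonIdealNU I : Set I) = jacobsonNU I :=
  TwoSidedIdeal.coe_mk' _ _ _ _ _ _

lemma IsIdempotentElem.eq_zero_of_mem_jacobsonNU {e : I} (he : IsIdempotentElem e)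
    (hJ : e ∈ jacobsonNU I) : e = 0 := by
  obtain ⟨b, hb⟩ := hJ e
  rw [he.eq] at hb
  calc e = e * (e + b - e * b) := by rw [mul_sub, mul_add, ← mul_assoc, he.eq]; abel
    _ = 0 := by rw [hb, mul_zero]

end JacobsonNU

namespace TwoSidedIdeal

variable {I : Type*} [NonUnitalRing I] {K L : TwoSidedIdeal I}

lemma mul_eq_zero_of_inf_eq_bot (hKL : K ⊓ L = ⊥) {k l : I} (hk : k ∈ K) (hl : l ∈ L) :
    k * l = 0 := by
  have h : k * l ∈ K ⊓ L := (mem_inf I).mpr ⟨K.mul_mem_right _ _ hk, L.mul_mem_left _ _ hl⟩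
  rwa [hKL, mem_bot] at h

lemma isIdempotentElem_left_of_inf_eq_bot (hKL : K ⊓ L = ⊥) {k l : I} (hk : k ∈ K)
    (hl : l ∈ L) (hf : IsIdempotentElem (k + l)) : IsIdempotentElem k := by
  have hkl := mul_eq_zero_of_inf_eq_bot hKL hk hl
  have hlk := mul_eq_zero_of_inf_eq_bot (inf_comm K L ▸ hKL) hl hk
  have hsq : k * k + l * l = k + l := by
    rw [← hf.eq, mul_add, add_mul, add_mul, hkl, hlk]; abel
  have hdiff : k * k - k = l - l * l := by
    rw [sub_eq_sub_iff_add_eq_add, add_comm l, hsq]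
  have hmem : k * k - k ∈ K ⊓ L := (mem_inf I).mpr
    ⟨K.sub_mem (K.mul_mem_right _ _ hk) hk, hdiff ▸ L.sub_mem hl (L.mul_mem_right _ _ hl)⟩
  rw [hKL, mem_bot] at hmem
  exact sub_eq_zero.mp hmem

lemma mul_mem_of_sup_eq_top (hKL : K ⊓ L = ⊥) {J : TwoSidedIdeal I} (hK : J ⊔ K = ⊤)
    (hL : J ⊔ L = ⊤) (x y : I) : x * y ∈ J := by
  obtain ⟨j, hj, k, hk, rfl⟩ := mem_sup.mp (hK ▸ mem_top I : x ∈ J ⊔ K)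
  obtain ⟨j', hj', l, hl, rfl⟩ := mem_sup.mp (hL ▸ mem_top I : y ∈ J ⊔ L)
  have hxy : (j + k) * (j' + l) = j * (j' + l) + k * j' + k * l := by noncomm_ring
  rw [hxy, mul_eq_zero_of_inf_eq_bot hKL hk hl, add_zero]
  exact J.add_mem (J.mul_mem_right _ _ hj) (J.mul_mem_left _ _ hj')

lemma subset_jacobsonNU_or_subset_jacobsonNU (hKL : K ⊓ L = ⊥)
    (hmulJ : ∃ x y : I, x * y ∉ jacobsonNU I)
    (hsimple : ∀ T : TwoSidedIdeal I, jacobsonNU I ⊆ (T : Set I) →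
      (T : Set I) = jacobsonNU I ∨ (T : Set I) = Set.univ) :
    (K : Set I) ⊆ jacobsonNU I ∨ (L : Set I) ⊆ jacobsonNU I := by
  have hdich (T : TwoSidedIdeal I) :
      (T : Set I) ⊆ jacobsonNU I ∨ jacobsonIdealNU I ⊔ T = ⊤ := by
    have hJT : jacobsonNU I ⊆ ((jacobsonIdealNU I ⊔ T : TwoSidedIdeal I) : Set I) :=
      fun x hx => mem_sup_left (by simpa [← SetLike.mem_coe] using hx)
    rcases hsimple _ hJT with h | h
    · exact .inl fun x hx => h ▸ mem_sup_right hx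
    · exact .inr <| SetLike.coe_injective (h.trans (coe_top I).symm)
  refine (hdich K).imp_right fun hK => (hdich L).resolve_right fun hL => ?_
  obtain ⟨x, y, hxy⟩ := hmulJ
  exact hxy (by simpa [← SetLike.mem_coe] using mul_mem_of_sup_eq_top hKL hK hL x y)

lemma eq_bot_of_subset_jacobsonNU (hKL : K ⊓ L = ⊥) (hKL' : K ⊔ L = ⊤) {f : I}
    (hf : IsIdempotentElem f) (hgen : ∀ T : TwoSidedIdeal I, f ∈ T → T = ⊤)
    (hK : (K : Set I) ⊆ jacobsonNU I) : K = ⊥ := by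
  obtain ⟨k, hk, l, hl, rfl⟩ := mem_sup.mp (hKL' ▸ mem_top I : f ∈ K ⊔ L)
  have hk0 : k = 0 :=
    (isIdempotentElem_left_of_inf_eq_bot hKL hk hl hf).eq_zero_of_mem_jacobsonNU (hK hk)
  have hL : L = ⊤ := hgen L (by rwa [hk0, zero_add])
  rwa [hL, inf_top_eq] at hKL

end TwoSidedIdeal

open TwoSidedIdeal in
/-- Let `I` be a (possibly non-unital) ring which is a direct sum of two-sided ideals
`I = K ⊕ L`, and suppose `I/J(I)` is a simple ring (its multiplication is nonzero modulo
`J(I)` and every two-sided ideal containing `J(I)` is `J(I)` or all of `I`). Then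
`K ⊆ J(I)` or `L ⊆ J(I)`; in particular, if `I` contains an idempotent `f` generating `I`
as an ideal of itself and `J(I)³ = 0`, then `I` is directly irreducible: `K = ⊥` or `L = ⊥`. -/
theorem direct_summand_in_radical {I : Type*} [NonUnitalRing I]
    (K L : TwoSidedIdeal I) (hKL : K ⊓ L = ⊥) (hKL' : K ⊔ L = ⊤)
    (hmulJ : ∃ x y : I, x * y ∉ jacobsonNU I)
    (hsimple : ∀ T : TwoSidedIdeal I, jacobsonNU I ⊆ (T : Set I) →
      (T : Set I) = jacobsonNU I ∨ (T : Set I) = Set.univ) :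
    ((K : Set I) ⊆ jacobsonNU I ∨ (L : Set I) ⊆ jacobsonNU I) ∧
    ((∃ f : I, f * f = f ∧ ∀ T : TwoSidedIdeal I, f ∈ T → T = ⊤) →
      (∀ x ∈ jacobsonNU I, ∀ y ∈ jacobsonNU I, ∀ z ∈ jacobsonNU I, x * y * z = 0) →
      K = ⊥ ∨ L = ⊥) := by
  have hsub := subset_jacobsonNU_or_subset_jacobsonNU hKL hmulJ hsimple
  refine ⟨hsub, ?_⟩
  rintro ⟨f, hf, hgen⟩ -
  exact hsub.imp (eq_bot_of_subset_jacobsonNU hKL hKL' hf hgen)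
    (eq_bot_of_subset_jacobsonNU (inf_comm K L ▸ hKL) (sup_comm K L ▸ hKL') hf hgen)
end

section
/- Let R be a unital ring, a ∈ R regular with a = aba and a² = a²ca² regular, and suppose aRa = I₀ ⊕ I₁ ⊕ ⋯ ⊕ I_k is a direct sum of ideals with I₀² = 0. Then a² ∈ I₁ ⊕ ⋯ ⊕ I_k. -/
/-- `I` is a two-sided ideal of the (generally non-unital) ring given by the subset `A`
of `R` with the multiplication of `R`. -/
def IsIdealOf {R : Type*} [Ring R] (A I : Set R) : Prop :=
  I ⊆ A ∧ (0 : R) ∈ I ∧ (∀ x ∈ I, ∀ y ∈ I, x + y ∈ I) ∧ (∀ x ∈ I, -x ∈ I) ∧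
    ∀ x ∈ I, ∀ y ∈ A, x * y ∈ I ∧ y * x ∈ I

/-- The sum of a family of subsets of `R` (as additive subgroups). -/
def sumOfSets {R : Type*} [Ring R] {ι : Type*} (s : Set ι) (I : ι → Set R) : Set R :=
  (AddSubgroup.closure (⋃ i ∈ s, I i) : AddSubgroup R)

/-!
Write `A = aRa` and `J = I₁ + ⋯ + I_k`. Every `x ∈ A` splits as `x₀ + x₁` with `x₀ ∈ I₀`,
`x₁ ∈ J`, so for `x, y ∈ A` we get `x * y = x₀ * y₀ + x₀ * y₁ + x₁ * y` with `x₀ * y₀ = 0` and the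
other two terms in the ideal `J`; hence `A * A ⊆ J`. Finally
`a² = a²ca²ca² = (a·ac·a) * (a·ca·a)` is such a product.
-/

open AddSubgroup

section

variable {R : Type*} [Ring R] {ι : Type*}

theorem IsIdealOf.exists_addSubgroup {A I : Set R} (h : IsIdealOf A I) :
    ∃ H : AddSubgroup R, (H : Set R) = I :=
  ⟨{ carrier := I
     zero_mem' := h.2.1
     add_mem' := fun hx hy => h.2.2.1 _ hx _ hy
     neg_mem' := fun hx => h.2.2.2.1 _ hx }, rfl⟩

theorem map_mem_sumOfSets {s : Set ι} {I : ι → Set R} (f : R →+ R)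
    (hf : ∀ i ∈ s, ∀ z ∈ I i, f z ∈ I i) {x : R} (hx : x ∈ sumOfSets s I) :
    f x ∈ sumOfSets s I := by
  have hle : closure (⋃ i ∈ s, I i) ≤ (closure (⋃ i ∈ s, I i)).comap f := by
    refine closure_le _ |>.2 fun z hz => ?_
    obtain ⟨i, hi, hzi⟩ := Set.mem_iUnion₂.1 hz
    exact subset_closure (Set.mem_biUnion hi (hf i hi z hzi))
  exact hle hx

theorem mul_mem_sumOfSets {A : Set R} {s : Set ι} {I : ι → Set R}
    (hI : ∀ i ∈ s, IsIdealOf A (I i)) {x y : R} (hx : x ∈ sumOfSets s I) (hy : y ∈ A) :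
    x * y ∈ sumOfSets s I :=
  map_mem_sumOfSets (AddMonoidHom.mulRight y) (fun i hi z hz => ((hI i hi).2.2.2.2 z hz y hy).1) hx

theorem mul_mem_sumOfSets_left {A : Set R} {s : Set ι} {I : ι → Set R}
    (hI : ∀ i ∈ s, IsIdealOf A (I i)) {x y : R} (hx : x ∈ A) (hy : y ∈ sumOfSets s I) :
    x * y ∈ sumOfSets s I :=
  map_mem_sumOfSets (AddMonoidHom.mulLeft x) (fun i hi z hz => ((hI i hi).2.2.2.2 z hz x hx).2) hy

theorem closure_iUnion_eq_sup (I : ι → Set R) (i : ι) :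
    closure (⋃ j ∈ Set.univ, I j) = closure (I i) ⊔ closure (⋃ j ∈ {j | j ≠ i}, I j) := by
  have huniv : (Set.univ : Set ι) = insert i {j | j ≠ i} := by
    ext j
    simp only [Set.mem_univ, Set.mem_insert_iff, Set.mem_ofPred_eq, true_iff]
    exact eq_or_ne j i
  rw [huniv, Set.biUnion_insert, AddSubgroup.closure_union]

theorem exists_add_of_mem_sumOfSets_univ {I : ι → Set R} {i : ι}
    (hI : ∃ H : AddSubgroup R, (H : Set R) = I i) {x : R} (hx : x ∈ sumOfSets Set.univ I) :
    ∃ u ∈ I i, ∃ v ∈ sumOfSets {j | j ≠ i} I, u + v = x := by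
  obtain ⟨H, hH⟩ := hI
  have hx' : x ∈ closure (I i) ⊔ closure (⋃ j ∈ {j | j ≠ i}, I j) :=
    closure_iUnion_eq_sup I i ▸ hx
  rw [← hH, closure_eq, mem_sup] at hx'
  obtain ⟨u, hu, v, hv, rfl⟩ := hx'
  exact ⟨u, hH ▸ hu, v, hv, rfl⟩

theorem mul_mem_sumOfSets_ne {A : Set R} {I : ι → Set R} (hI : ∀ j, IsIdealOf A (I j))
    (hsum : A ⊆ sumOfSets Set.univ I) {i : ι} (hsq : ∀ x ∈ I i, ∀ y ∈ I i, x * y = 0)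
    {x y : R} (hx : x ∈ A) (hy : y ∈ A) :
    x * y ∈ sumOfSets {j | j ≠ i} I := by
  have hI' : ∀ j ∈ {j | j ≠ i}, IsIdealOf A (I j) := fun j _ => hI j
  obtain ⟨x₀, hx₀, x₁, hx₁, rfl⟩ :=
    exists_add_of_mem_sumOfSets_univ (hI i).exists_addSubgroup (hsum hx)
  obtain ⟨y₀, hy₀, y₁, hy₁, rfl⟩ :=
    exists_add_of_mem_sumOfSets_univ (hI i).exists_addSubgroup (hsum hy)
  have hexpand : (x₀ + x₁) * (y₀ + y₁) = x₀ * y₀ + x₀ * y₁ + x₁ * (y₀ + y₁) := by noncomm_ring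
  rw [hexpand, hsq x₀ hx₀ y₀ hy₀, zero_add]
  exact add_mem (mul_mem_sumOfSets_left hI' ((hI i).1 hx₀) hy₁) (mul_mem_sumOfSets hI' hx₁ hy)

end

theorem sq_mem_sum_ideals_general {R : Type*} [Ring R] (a c : R)
    (hc : a * a * c * (a * a) = a * a)
    (k : ℕ) (I : Fin (k + 1) → Set R)
    (hideal : ∀ i, IsIdealOf {x : R | ∃ r : R, x = a * r * a} (I i))
    (hsum : {x : R | ∃ r : R, x = a * r * a} = sumOfSets Set.univ I)
    (hI0 : ∀ x ∈ I 0, ∀ y ∈ I 0, x * y = 0) :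
    a * a ∈ sumOfSets {j | j ≠ 0} I := by
  have hfactor : a * a = a * (a * c) * a * (a * (c * a) * a) := by
    calc a * a = a * a * c * (a * a) * c * (a * a) := by rw [hc, hc]
      _ = a * (a * c) * a * (a * (c * a) * a) := by noncomm_ring
  rw [hfactor]
  exact mul_mem_sumOfSets_ne hideal hsum.subset hI0 ⟨a * c, rfl⟩ ⟨c * a, rfl⟩

/-- Let `a` be regular (`a = a*b*a`) with `a²` regular (`a² = a²*c*a²`), and suppose
`aRa = I₀ ⊕ I₁ ⊕ ⋯ ⊕ I_k` is a direct sum of ideals of `aRa` with `I₀² = 0`. Then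
`a² ∈ I₁ ⊕ ⋯ ⊕ I_k`. -/
theorem sq_mem_sum_ideals {R : Type*} [Ring R] (a b c : R)
    (hb : a * b * a = a) (hc : a * a * c * (a * a) = a * a)
    (k : ℕ) (I : Fin (k + 1) → Set R)
    (hideal : ∀ i, IsIdealOf {x : R | ∃ r : R, x = a * r * a} (I i))
    (hsum : {x : R | ∃ r : R, x = a * r * a} = sumOfSets Set.univ I)
    (hdirect : ∀ i, I i ∩ sumOfSets {j | j ≠ i} I ⊆ {0})
    (hI0 : ∀ x ∈ I 0, ∀ y ∈ I 0, x * y = 0) :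
    a * a ∈ sumOfSets {j | j ≠ 0} I :=
  sq_mem_sum_ideals_general a c hc k I hideal hsum hI0
end
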